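/- arXiv:1602.06524 — 4 statements merged into one kernel-verified Lean document; each statement's English description precedes it below -/
import Mathlib

section
/- On ℝ⁶, write y := |x|²/24 and define P̃(x) := (1+y)^{−3}·(1 − 10y − 3y²) and Q̃(x) := (1+y)^{−3}·(1 + 11y − 12y²). Then for all x ∈ ℝ⁶: −ΔP̃(x) − 2W(x)P̃(x) = (5/4)·ΛW(x) + 2W(x), and −ΔQ̃(x) − 2W(x)Q̃(x) = −Λ₀ΛW(x), where Λ₀ΛW := 3·ΛW + x·∇(ΛW). -/
noncomputable section

/-- Six-dimensional Euclidean space. -/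
abbrev E6 := EuclideanSpace ℝ (Fin 6)

/-- The (pointwise) Laplacian of a function on `ℝ⁶`, as the sum of second
directional derivatives along the coordinate directions. -/
def lap6 (f : E6 → ℝ) (x : E6) : ℝ :=
  ∑ i : Fin 6,
    fderiv ℝ (fun y => fderiv ℝ f y (EuclideanSpace.single i 1)) x
      (EuclideanSpace.single i 1)

/-- The Aubin–Talenti ground state `W(x) = (1+|x|²/24)⁻²` on `ℝ⁶`. -/
def W6 (x : E6) : ℝ := ((1 + ‖x‖ ^ 2 / 24) ^ 2)⁻¹

/-- `ΛW = 2W + x·∇W`, the generator of the `Ḣ¹`-critical scaling applied to `W`. -/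
def lamW6 (x : E6) : ℝ := 2 * W6 x + fderiv ℝ W6 x x

/-- `Λ₀ΛW = 3·ΛW + x·∇(ΛW)`. -/
def lam0lamW6 (x : E6) : ℝ := 3 * lamW6 x + fderiv ℝ lamW6 x x

/-- `P̃(x) = (1+y)⁻³(1 − 10y − 3y²)` with `y = |x|²/24`. -/
def Ptilde (x : E6) : ℝ :=
  ((1 + ‖x‖ ^ 2 / 24) ^ 3)⁻¹ *
    (1 - 10 * (‖x‖ ^ 2 / 24) - 3 * (‖x‖ ^ 2 / 24) ^ 2)

/-- `Q̃(x) = (1+y)⁻³(1 + 11y − 12y²)` with `y = |x|²/24`. -/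
def Qtilde (x : E6) : ℝ :=
  ((1 + ‖x‖ ^ 2 / 24) ^ 3)⁻¹ *
    (1 + 11 * (‖x‖ ^ 2 / 24) - 12 * (‖x‖ ^ 2 / 24) ^ 2)

/-! ### Auxiliary radial-profile machinery -/

/-- Radial profile of `W6`. -/
def phiW (t : ℝ) : ℝ := ((1 + t / 24) ^ 2)⁻¹
/-- First derivative of `phiW`. -/
def DW (t : ℝ) : ℝ := ((1 + t / 24) ^ 3)⁻¹ * (-1 / 12)
/-- Second derivative of `phiW`. -/
def DW2 (t : ℝ) : ℝ := ((1 + t / 24) ^ 4)⁻¹ * (1 / 96)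
/-- Radial profile of `Ptilde`. -/
def phiP (t : ℝ) : ℝ := ((1 + t / 24) ^ 3)⁻¹ * (1 - 10 * (t / 24) - 3 * (t / 24) ^ 2)
/-- First derivative of `phiP`. -/
def DP (t : ℝ) : ℝ := ((1 + t / 24) ^ 4)⁻¹ * (-13 / 24 + 7 / 288 * t + 1 / 4608 * t ^ 2)
/-- Second derivative of `phiP`. -/
def DP2 (t : ℝ) : ℝ := ((1 + t / 24) ^ 5)⁻¹ * (11 / 96 - 1 / 384 * t - 1 / 55296 * t ^ 2)
/-- Radial profile of `Qtilde`. -/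
def phiQ (t : ℝ) : ℝ := ((1 + t / 24) ^ 3)⁻¹ * (1 + 11 * (t / 24) - 12 * (t / 24) ^ 2)
/-- First derivative of `phiQ`. -/
def DQ (t : ℝ) : ℝ := ((1 + t / 24) ^ 4)⁻¹ * (1 / 3 - 23 / 288 * t + 1 / 1152 * t ^ 2)
/-- Second derivative of `phiQ`. -/
def DQ2 (t : ℝ) : ℝ := ((1 + t / 24) ^ 5)⁻¹ * (-13 / 96 + 3 / 256 * t - 1 / 13824 * t ^ 2)
/-- Radial profile of `lamW6`. -/
def psiW (t : ℝ) : ℝ := ((1 + t / 24) ^ 3)⁻¹ * (2 - t / 12)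
/-- First derivative of `psiW`. -/
def DpsiW (t : ℝ) : ℝ := ((1 + t / 24) ^ 4)⁻¹ * (-1 / 3 + t / 144)

lemma hasDerivAt_u (k : ℕ) (t : ℝ) :
    HasDerivAt (fun s : ℝ => (1 + s / 24) ^ k) ((k : ℝ) * (1 + t / 24) ^ (k - 1) * (1 / 24)) t := by
  simpa using (((hasDerivAt_id t).div_const 24).const_add (1 : ℝ)).fun_pow k

lemma dW (t : ℝ) (ht : 0 ≤ t) : HasDerivAt phiW (DW t) t := by
  have hne : (0:ℝ) < 1 + t / 24 := by positivity
  have h := (hasDerivAt_u 2 t).inv (by positivity)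
  refine h.congr_deriv ?_
  unfold DW
  norm_num
  field_simp
  ring

lemma dDW (t : ℝ) (ht : 0 ≤ t) : HasDerivAt DW (DW2 t) t := by
  have hne : (0:ℝ) < 1 + t / 24 := by positivity
  have h := ((hasDerivAt_u 3 t).inv (by positivity)).mul (hasDerivAt_const t ((-1:ℝ)/12))
  refine h.congr_deriv ?_
  unfold DW2
  norm_num
  field_simp
  ring

lemma dP (t : ℝ) (ht : 0 ≤ t) : HasDerivAt phiP (DP t) t := by
  have hne : (0:ℝ) < 1 + t / 24 := by positivity
  have h1 : HasDerivAt (fun s : ℝ => s / 24) (1 / 24) t := (hasDerivAt_id t).div_const 24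
  have hp := ((hasDerivAt_const t (1:ℝ)).sub (h1.const_mul (10:ℝ))).sub ((h1.pow 2).const_mul (3:ℝ))
  have h := ((hasDerivAt_u 3 t).inv (by positivity)).mul hp
  refine h.congr_deriv ?_
  unfold DP
  norm_num
  field_simp
  ring

lemma dDP (t : ℝ) (ht : 0 ≤ t) : HasDerivAt DP (DP2 t) t := by
  have hne : (0:ℝ) < 1 + t / 24 := by positivity
  have h1 : HasDerivAt (fun s : ℝ => s / 24) (1 / 24) t := (hasDerivAt_id t).div_const 24
  have hid := hasDerivAt_id t
  have hp := ((hasDerivAt_const t ((-13:ℝ)/24)).add (hid.const_mul ((7:ℝ)/288))).add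
    ((hid.pow 2).const_mul ((1:ℝ)/4608))
  have h := ((hasDerivAt_u 4 t).inv (by positivity)).mul hp
  refine h.congr_deriv ?_
  unfold DP2
  norm_num
  field_simp
  ring

lemma dQ (t : ℝ) (ht : 0 ≤ t) : HasDerivAt phiQ (DQ t) t := by
  have hne : (0:ℝ) < 1 + t / 24 := by positivity
  have h1 : HasDerivAt (fun s : ℝ => s / 24) (1 / 24) t := (hasDerivAt_id t).div_const 24
  have hp := ((hasDerivAt_const t (1:ℝ)).add (h1.const_mul (11:ℝ))).sub
    ((h1.pow 2).const_mul (12:ℝ))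
  have h := ((hasDerivAt_u 3 t).inv (by positivity)).mul hp
  refine h.congr_deriv ?_
  unfold DQ
  norm_num
  field_simp
  ring

lemma dDQ (t : ℝ) (ht : 0 ≤ t) : HasDerivAt DQ (DQ2 t) t := by
  have hne : (0:ℝ) < 1 + t / 24 := by positivity
  have hid := hasDerivAt_id t
  have hp := ((hasDerivAt_const t ((1:ℝ)/3)).sub (hid.const_mul ((23:ℝ)/288))).add
    ((hid.pow 2).const_mul ((1:ℝ)/1152))
  have h := ((hasDerivAt_u 4 t).inv (by positivity)).mul hp
  refine h.congr_deriv ?_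
  unfold DQ2
  norm_num
  field_simp
  ring

lemma dpsi (t : ℝ) (ht : 0 ≤ t) : HasDerivAt psiW (DpsiW t) t := by
  have hne : (0:ℝ) < 1 + t / 24 := by positivity
  have hp := (hasDerivAt_const t (2:ℝ)).sub ((hasDerivAt_id t).div_const 12)
  have h := ((hasDerivAt_u 3 t).inv (by positivity)).mul hp
  refine h.congr_deriv ?_
  unfold DpsiW
  norm_num
  field_simp
  ring

lemma radial_hasFDerivAt {φ D : ℝ → ℝ} (hφ : ∀ t : ℝ, 0 ≤ t → HasDerivAt φ (D t) t) (x : E6) :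
    HasFDerivAt (fun y : E6 => φ (‖y‖ ^ 2)) (D (‖x‖ ^ 2) • (2 • innerSL ℝ x)) x :=
  (hφ (‖x‖ ^ 2) (by positivity)).comp_hasFDerivAt x (hasStrictFDerivAt_norm_sq x).hasFDerivAt

lemma radial_fderiv_apply {φ D : ℝ → ℝ} (hφ : ∀ t : ℝ, 0 ≤ t → HasDerivAt φ (D t) t)
    (x v : E6) :
    fderiv ℝ (fun y : E6 => φ (‖y‖ ^ 2)) x v = D (‖x‖ ^ 2) * (2 * (inner ℝ x v : ℝ)) := by
  rw [(radial_hasFDerivAt hφ x).fderiv]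
  simp [two_smul]
  ring

lemma sum_coord_sq (x : E6) : ∑ i : Fin 6, x i * x i = ‖x‖ ^ 2 := by
  rw [EuclideanSpace.norm_eq, Real.sq_sqrt (by positivity)]
  simp [sq]

lemma radial_lap {φ D D2 : ℝ → ℝ} (hφ : ∀ t : ℝ, 0 ≤ t → HasDerivAt φ (D t) t)
    (hD : ∀ t : ℝ, 0 ≤ t → HasDerivAt D (D2 t) t) (x : E6) :
    lap6 (fun y : E6 => φ (‖y‖ ^ 2)) x
      = 12 * D (‖x‖ ^ 2) + 4 * ‖x‖ ^ 2 * D2 (‖x‖ ^ 2) := by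
  have hcongr : ∀ v : E6, (fun y : E6 => fderiv ℝ (fun z : E6 => φ (‖z‖ ^ 2)) y v)
      = fun y : E6 => D (‖y‖ ^ 2) * (2 * (inner ℝ v y : ℝ)) := by
    intro v
    funext y
    rw [radial_fderiv_apply hφ, real_inner_comm]
  have hder : ∀ v : E6,
      HasFDerivAt (fun y : E6 => D (‖y‖ ^ 2) * (2 * (inner ℝ v y : ℝ)))
        (D (‖x‖ ^ 2) • (2 • innerSL ℝ v)
          + (2 * (inner ℝ v x : ℝ)) • (D2 (‖x‖ ^ 2) • (2 • innerSL ℝ x))) x := by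
    intro v
    have h1 := radial_hasFDerivAt hD x
    have h2 : HasFDerivAt (fun y : E6 => 2 * (inner ℝ v y : ℝ)) (2 • innerSL ℝ v) x := by
      simpa [two_smul] using (innerSL ℝ v).hasFDerivAt.const_mul (2 : ℝ)
    exact h1.mul h2
  have hval : ∀ i : Fin 6,
      fderiv ℝ (fun y : E6 => fderiv ℝ (fun z : E6 => φ (‖z‖ ^ 2)) y
          (EuclideanSpace.single i 1)) x (EuclideanSpace.single i 1)
        = 2 * D (‖x‖ ^ 2) + 4 * D2 (‖x‖ ^ 2) * (x i * x i) := by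
    intro i
    rw [hcongr, (hder (EuclideanSpace.single i 1)).fderiv]
    have e1 : (inner ℝ (EuclideanSpace.single i (1:ℝ)) (EuclideanSpace.single i (1:ℝ)) : ℝ) = 1 := by
      simp [EuclideanSpace.inner_single_left]
    have e2 : (inner ℝ (EuclideanSpace.single i (1:ℝ)) x : ℝ) = x i := by
      simp [EuclideanSpace.inner_single_left]
    have e3 : (inner ℝ x (EuclideanSpace.single i (1:ℝ)) : ℝ) = x i := by
      simp [EuclideanSpace.inner_single_right]
    simp [e1, e2, e3, two_smul]
    ring
  unfold lap6
  rw [Finset.sum_congr rfl fun i _ => hval i]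
  rw [Finset.sum_add_distrib, Finset.sum_const, ← Finset.mul_sum, sum_coord_sq]
  simp
  ring

lemma lamW6_eq : lamW6 = fun y : E6 => psiW (‖y‖ ^ 2) := by
  funext y
  have hy : (0:ℝ) ≤ ‖y‖ ^ 2 := by positivity
  have hne : (0:ℝ) < 1 + ‖y‖ ^ 2 / 24 := by positivity
  have hW : W6 = fun z : E6 => phiW (‖z‖ ^ 2) := rfl
  have hfd : fderiv ℝ W6 y y = DW (‖y‖ ^ 2) * (2 * (inner ℝ y y : ℝ)) := by
    rw [hW]; exact radial_fderiv_apply dW y y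
  rw [real_inner_self_eq_norm_sq] at hfd
  show 2 * W6 y + fderiv ℝ W6 y y = psiW (‖y‖ ^ 2)
  rw [hfd]
  show 2 * phiW (‖y‖ ^ 2) + DW (‖y‖ ^ 2) * (2 * ‖y‖ ^ 2) = psiW (‖y‖ ^ 2)
  unfold phiW DW psiW
  field_simp
  ring

/-- The explicit profiles `P̃`, `Q̃` satisfy `LP̃ = (5/4)ΛW + 2W` and `LQ̃ = −Λ₀ΛW`,
where `L = −Δ − 2W` is the operator obtained by linearizing the energy-critical
wave equation on `ℝ⁶` around the ground state `W`. -/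
theorem stmt3 (x : E6) :
    (-(lap6 Ptilde x) - 2 * W6 x * Ptilde x = (5 / 4) * lamW6 x + 2 * W6 x) ∧
    (-(lap6 Qtilde x) - 2 * W6 x * Qtilde x = -(lam0lamW6 x)) := by
  have hs : (0:ℝ) ≤ ‖x‖ ^ 2 := by positivity
  have hne : (0:ℝ) < 1 + ‖x‖ ^ 2 / 24 := by positivity
  have hP : Ptilde = fun y : E6 => phiP (‖y‖ ^ 2) := rfl
  have hQ : Qtilde = fun y : E6 => phiQ (‖y‖ ^ 2) := rfl
  have hW : W6 x = phiW (‖x‖ ^ 2) := rfl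
  have lapP : lap6 Ptilde x = 12 * DP (‖x‖ ^ 2) + 4 * ‖x‖ ^ 2 * DP2 (‖x‖ ^ 2) := by
    rw [hP]; exact radial_lap dP dDP x
  have lapQ : lap6 Qtilde x = 12 * DQ (‖x‖ ^ 2) + 4 * ‖x‖ ^ 2 * DQ2 (‖x‖ ^ 2) := by
    rw [hQ]; exact radial_lap dQ dDQ x
  have hlamval : lamW6 x = psiW (‖x‖ ^ 2) := by rw [lamW6_eq]
  have hlamfd : fderiv ℝ lamW6 x x = DpsiW (‖x‖ ^ 2) * (2 * ‖x‖ ^ 2) := by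
    rw [lamW6_eq]
    rw [radial_fderiv_apply dpsi x x, real_inner_self_eq_norm_sq]
  have hlam0 : lam0lamW6 x = 3 * psiW (‖x‖ ^ 2) + DpsiW (‖x‖ ^ 2) * (2 * ‖x‖ ^ 2) := by
    unfold lam0lamW6
    rw [hlamval, hlamfd]
  constructor
  · rw [lapP, hW, hlamval]
    show _ - 2 * phiW (‖x‖ ^ 2) * phiP (‖x‖ ^ 2) = _
    unfold DP DP2 phiW phiP psiW
    field_simp
    ring
  · rw [lapQ, hW, hlam0]
    show _ - 2 * phiW (‖x‖ ^ 2) * phiQ (‖x‖ ^ 2) = _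
    unfold DQ DQ2 phiW phiQ psiW DpsiW
    field_simp
    ring

end
end

section
/- For every h ∈ C_c^∞(ℝ⁶) which is not identically zero, ∫_{ℝ⁶} (|∇h|² + h²) dx > 2∫_{ℝ⁶} W·h² dx, where W(x) = (1+|x|²/24)^{−2}. (Equivalently, the quadratic form of −Δ − 2W + 1 is positive definite on C_c^∞(ℝ⁶); this expresses that the unique negative eigenvalue −ν² of L = −Δ − 2W satisfies ν < 1.) -/
open MeasureTheory

noncomputable section

namespace Stmt6Aux

open InnerProductSpace

local notation "⟪" x ", " y "⟫" => @inner ℝ _ _ x y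

/-- `q x = 1 + ‖x‖²/24`. -/
def q (x : E6) : ℝ := 1 + ‖x‖ ^ 2 / 24

lemma q_pos (x : E6) : 0 < q x := by
  have : (0:ℝ) ≤ ‖x‖ ^ 2 := sq_nonneg _
  unfold q; nlinarith

lemma q_ne (x : E6) : q x ≠ 0 := (q_pos x).ne'

lemma one_le_q (x : E6) : 1 ≤ q x := by
  have : (0:ℝ) ≤ ‖x‖ ^ 2 := sq_nonneg _
  unfold q; nlinarith

lemma contDiff_q : ContDiff ℝ (⊤ : ℕ∞) q := by
  unfold q
  exact contDiff_const.add (contDiff_norm_sq ℝ |>.div_const _)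

lemma W6_eq (x : E6) : W6 x = ((q x) ^ 2)⁻¹ := rfl

lemma W6_pos (x : E6) : 0 < W6 x := by
  rw [W6_eq]; exact inv_pos.mpr (pow_pos (q_pos x) 2)

lemma W6_le_one (x : E6) : W6 x ≤ 1 := by
  rw [W6_eq]
  rw [inv_le_one_iff₀]
  right
  nlinarith [one_le_q x]

lemma W6_lt_one {x : E6} (hx : x ≠ 0) : W6 x < 1 := by
  rw [W6_eq]
  have h1 : (1:ℝ) < q x := by
    have : 0 < ‖x‖ ^ 2 := pow_pos (norm_pos_iff.mpr hx) 2
    unfold q; nlinarith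
  rw [inv_lt_one_iff₀]
  right
  nlinarith

lemma contDiff_W6 : ContDiff ℝ (⊤ : ℕ∞) W6 := by
  have : ∀ x : E6, (q x) ^ 2 ≠ 0 := fun x => pow_ne_zero _ (q_ne x)
  exact (contDiff_q.pow 2).inv this

/-- From an `fderiv` representation to a gradient. -/
lemma hasGradientAt_of {f : E6 → ℝ} {φ : E6 →L[ℝ] ℝ} {v : E6} {x : E6}
    (hf : HasFDerivAt f φ x) (hv : ∀ y, φ y = ⟪v, y⟫) : HasGradientAt f v x := by
  rw [hasGradientAt_iff_hasFDerivAt]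
  suffices e : toDual ℝ E6 v = φ by rw [e]; exact hf
  ext y
  simp [toDual_apply_apply, hv y]

lemma gradInnerEq {f : E6 → ℝ} {v x y : E6} (hf : HasGradientAt f v x) :
    fderiv ℝ f x y = ⟪v, y⟫ := by
  rw [hasGradientAt_iff_hasFDerivAt] at hf
  rw [hf.fderiv]
  simp [toDual_apply_apply]

/-- Product rule for gradients. -/
lemma gradMul {f g : E6 → ℝ} {a b : E6} {x : E6}
    (hf : HasGradientAt f a x) (hg : HasGradientAt g b x) :
    HasGradientAt (fun y => f y * g y) (f x • b + g x • a) x := by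
  rw [hasGradientAt_iff_hasFDerivAt] at hf hg
  refine hasGradientAt_of (hf.mul hg) fun y => ?_
  simp only [ContinuousLinearMap.add_apply, ContinuousLinearMap.coe_smul', Pi.smul_apply,
    smul_eq_mul, toDual_apply_apply, inner_add_left, real_inner_smul_left]

/-- Chain rule for gradients with a scalar outer function. -/
lemma gradComp {f : E6 → ℝ} {φ : ℝ → ℝ} {a : E6} {d : ℝ} {x : E6}
    (hφ : HasDerivAt φ d (f x)) (hf : HasGradientAt f a x) :
    HasGradientAt (fun y => φ (f y)) (d • a) x := by
  rw [hasGradientAt_iff_hasFDerivAt] at hf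
  refine hasGradientAt_of (hφ.hasFDerivAt.comp x hf) fun y => ?_
  simp only [ContinuousLinearMap.coe_comp', Function.comp_apply, toDual_apply_apply,
    ContinuousLinearMap.smulRight_apply, ContinuousLinearMap.one_apply, ContinuousLinearMap.toSpanSingleton_apply, smul_eq_mul,
    real_inner_smul_left]
  ring

lemma hasGradientAt_q (x : E6) : HasGradientAt q ((1/12 : ℝ) • x) x := by
  have h1 : HasFDerivAt (fun y : E6 => ‖y‖ ^ 2) (2 • (innerSL ℝ x)) x :=
    (hasFDerivAt_id x).norm_sq
  have h2 : HasFDerivAt q ((1/24 : ℝ) • (2 • (innerSL ℝ x))) x := by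
    have hq : q = fun y : E6 => 1 + (1/24 : ℝ) • ‖y‖ ^ 2 := by
      funext y; simp [q, smul_eq_mul]; ring
    rw [hq]
    exact (h1.const_smul (1/24 : ℝ)).const_add 1
  refine hasGradientAt_of h2 fun y => ?_
  simp only [ContinuousLinearMap.coe_smul', Pi.smul_apply, innerSL_apply_apply, smul_eq_mul,
    real_inner_smul_left]
  ring

lemma hasGradientAt_W6 (x : E6) :
    HasGradientAt W6 ((-(1/6) * ((q x) ^ 3)⁻¹) • x) x := by
  have hd : HasDerivAt (fun t : ℝ => (t ^ 2)⁻¹) (-(2 * q x) / ((q x) ^ 2) ^ 2) (q x) := by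
    exact ((hasDerivAt_pow 2 (q x)).inv (pow_ne_zero 2 (q_ne x))).congr_deriv (by norm_num)
  have := gradComp hd (hasGradientAt_q x)
  have heq : (-(2 * q x) / ((q x) ^ 2) ^ 2) • ((1/12 : ℝ) • x)
      = (-(1/6) * ((q x) ^ 3)⁻¹) • x := by
    rw [smul_smul]
    congr 1
    have := q_ne x
    field_simp
    ring
  rw [heq] at this
  exact this

/-- The substituted function `u = h / W = h q²`. -/
def u (h : E6 → ℝ) (x : E6) : ℝ := h x * (q x) ^ 2

/-- The density of the divergence field: `ρ = -(1/6) u² q⁻⁵`. -/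
def rho (h : E6 → ℝ) (x : E6) : ℝ := u h x * (-(1/6) * u h x * ((q x) ^ 5)⁻¹)

/-- Components of the vector field `V = ρ • x`. -/
def Vc (h : E6 → ℝ) (i : Fin 6) (x : E6) : ℝ := rho h x * x i

/-- Divergence of `V`. -/
def divV (h : E6 → ℝ) (x : E6) : ℝ :=
  ∑ i, fderiv ℝ (Vc h i) x (EuclideanSpace.single i 1)

lemma contDiff_u {h : E6 → ℝ} (hsm : ContDiff ℝ (⊤ : ℕ∞) h) : ContDiff ℝ (⊤ : ℕ∞) (u h) :=
  hsm.mul (contDiff_q.pow 2)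

lemma contDiff_rho {h : E6 → ℝ} (hsm : ContDiff ℝ (⊤ : ℕ∞) h) :
    ContDiff ℝ (⊤ : ℕ∞) (rho h) :=
  (contDiff_u hsm).mul ((contDiff_const.mul (contDiff_u hsm)).mul
    ((contDiff_q.pow 5).inv fun x => pow_ne_zero _ (q_ne x)))

lemma contDiff_Vc {h : E6 → ℝ} (hsm : ContDiff ℝ (⊤ : ℕ∞) h) (i : Fin 6) :
    ContDiff ℝ (⊤ : ℕ∞) (Vc h i) :=
  (contDiff_rho hsm).mul (EuclideanSpace.proj (𝕜 := ℝ) i).contDiff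

lemma hcs_u {h : E6 → ℝ} (hsupp : HasCompactSupport h) : HasCompactSupport (u h) :=
  hsupp.mul_right

lemma hcs_rho {h : E6 → ℝ} (hsupp : HasCompactSupport h) : HasCompactSupport (rho h) :=
  (hcs_u hsupp).mul_right

lemma hcs_Vc {h : E6 → ℝ} (hsupp : HasCompactSupport h) (i : Fin 6) :
    HasCompactSupport (Vc h i) :=
  (hcs_rho hsupp).mul_right

lemma u_mul_W6 (h : E6 → ℝ) : (fun y => u h y * W6 y) = h := by
  funext y
  have hq := q_ne y
  rw [u, W6_eq]
  field_simp

/-- Expansion of the squared norm of a linear combination. -/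
lemma norm_comb (α β : ℝ) (v w : E6) :
    ‖α • v + β • w‖ ^ 2
      = α ^ 2 * ‖v‖ ^ 2 + 2 * (α * β) * ⟪v, w⟫ + β ^ 2 * ‖w‖ ^ 2 := by
  rw [← real_inner_self_eq_norm_sq, ← real_inner_self_eq_norm_sq,
    ← real_inner_self_eq_norm_sq]
  simp only [inner_add_left, inner_add_right, real_inner_smul_left, real_inner_smul_right]
  rw [real_inner_comm w v]
  ring

/-- Expansion of an inner product of a linear combination with `v`. -/
lemma inner_comb (α β : ℝ) (v w : E6) :
    ⟪α • v + β • w, v⟫ = α * ‖v‖ ^ 2 + β * ⟪v, w⟫ := by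
  rw [← real_inner_self_eq_norm_sq]
  simp only [inner_add_left, real_inner_smul_left]
  rw [real_inner_comm w v]

/-- The key pointwise identity:
`‖∇h‖² − W h² − div(u² W ∇W) = W² ‖∇u‖²`. -/
lemma key {h : E6 → ℝ} (hsm : ContDiff ℝ (⊤ : ℕ∞) h) (x : E6) :
    ‖gradient h x‖ ^ 2 - W6 x * h x ^ 2 - divV h x
      = (W6 x) ^ 2 * ‖gradient (u h) x‖ ^ 2 := by
  have hqne := q_ne x
  set a := gradient (u h) x with ha
  -- gradient of u
  have hGu : HasGradientAt (u h) a x :=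
    (((contDiff_u hsm).differentiable (by simp)) x).hasGradientAt
  -- gradient of h = u * W6
  have hGh : HasGradientAt h
      (u h x • ((-(1/6) * ((q x) ^ 3)⁻¹) • x) + W6 x • a) x := by
    have := gradMul hGu (hasGradientAt_W6 x)
    rwa [u_mul_W6 h] at this
  have grad_h_eq : gradient h x
      = u h x • ((-(1/6) * ((q x) ^ 3)⁻¹) • x) + W6 x • a := hGh.gradient
  -- gradient of rho
  have hd : HasDerivAt (fun t : ℝ => (t ^ 5)⁻¹)
      (-(5 * q x ^ 4) / ((q x ^ 5)) ^ 2) (q x) := by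
    have := (hasDerivAt_pow 5 (q x)).inv (pow_ne_zero _ hqne)
    exact this.congr_deriv (by norm_num)
  have g1 : HasGradientAt (fun y => ((q y) ^ 5)⁻¹)
      ((-(5 * q x ^ 4) / ((q x ^ 5)) ^ 2) • ((1/12 : ℝ) • x)) x :=
    gradComp (φ := fun t : ℝ => (t ^ 5)⁻¹) hd (hasGradientAt_q x)
  have g2 : HasGradientAt (fun y => -(1/6) * u h y) ((-(1/6) : ℝ) • a) x := by
    have hφ : HasDerivAt (fun t : ℝ => -(1/6) * t) (-(1/6)) (u h x) := by
      simpa using (hasDerivAt_id (u h x)).const_mul (-(1/6) : ℝ)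
    exact gradComp hφ hGu
  have g3 : HasGradientAt (fun y => -(1/6) * u h y * ((q y) ^ 5)⁻¹)
      ((-(1/6) * u h x) • ((-(5 * q x ^ 4) / ((q x ^ 5)) ^ 2) • ((1/12 : ℝ) • x))
        + ((q x) ^ 5)⁻¹ • ((-(1/6) : ℝ) • a)) x := gradMul g2 g1
  have g4 : HasGradientAt (rho h)
      (u h x • ((-(1/6) * u h x) • ((-(5 * q x ^ 4) / ((q x ^ 5)) ^ 2) • ((1/12 : ℝ) • x))
          + ((q x) ^ 5)⁻¹ • ((-(1/6) : ℝ) • a))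
        + (-(1/6) * u h x * ((q x) ^ 5)⁻¹) • a) x := gradMul hGu g3
  set vr := u h x • ((-(1/6) * u h x) • ((-(5 * q x ^ 4) / ((q x ^ 5)) ^ 2) • ((1/12 : ℝ) • x))
          + ((q x) ^ 5)⁻¹ • ((-(1/6) : ℝ) • a))
        + (-(1/6) * u h x * ((q x) ^ 5)⁻¹) • a with hvr
  have hFr : HasFDerivAt (rho h) (InnerProductSpace.toDual ℝ E6 vr) x :=
    hasGradientAt_iff_hasFDerivAt.mp g4
  -- divergence computation
  have hdiv : divV h x = 6 * rho h x + ⟪vr, x⟫ := by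
    unfold divV Vc
    have hfd : ∀ i : Fin 6, fderiv ℝ (fun y : E6 => rho h y * y i) x =
        rho h x • (EuclideanSpace.proj (𝕜 := ℝ) i)
          + x i • (InnerProductSpace.toDual ℝ E6 vr) :=
      fun i => (hFr.mul ((EuclideanSpace.proj (𝕜 := ℝ) i).hasFDerivAt)).fderiv
    simp only [hfd, ContinuousLinearMap.add_apply, ContinuousLinearMap.coe_smul',
      Pi.smul_apply, smul_eq_mul, toDual_apply_apply]
    have h1 : ∀ i : Fin 6, (EuclideanSpace.proj (𝕜 := ℝ) i) (EuclideanSpace.single i 1) = 1 := by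
      intro i; simp
    have h2 : ∀ i : Fin 6, ⟪vr, EuclideanSpace.single i (1:ℝ)⟫ = vr i := by
      intro i
      simp [PiLp.inner_apply, EuclideanSpace.single_apply]
    have h3 : ⟪vr, x⟫ = ∑ i, x i * vr i := by
      simp [PiLp.inner_apply, mul_comm]
    simp only [h1, h2, mul_one]
    rw [Finset.sum_add_distrib, h3]
    simp [Finset.sum_const, Finset.card_univ]
  have hgr2 : gradient h x = (u h x * (-(1/6) * ((q x) ^ 3)⁻¹)) • x + W6 x • a := by
    rw [grad_h_eq]; module
  have hvr2 : vr = (u h x * (-(1/6) * u h x) * (-(5 * q x ^ 4) / ((q x ^ 5)) ^ 2) * (1/12)) • x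
      + (u h x * (((q x) ^ 5)⁻¹ * -(1/6)) + -(1/6) * u h x * ((q x) ^ 5)⁻¹) • a := by
    rw [hvr]; module
  rw [hgr2, hdiv, hvr2, norm_comb, inner_comb]
  have hW : W6 x = ((q x) ^ 2)⁻¹ := W6_eq x
  have hh : h x = u h x * W6 x := (congrFun (u_mul_W6 h) x).symm
  have hrho : rho h x = u h x * (-(1/6) * u h x * ((q x) ^ 5)⁻¹) := rfl
  rw [hrho, hh, hW]
  have hq : q x = 1 + ‖x‖ ^ 2 / 24 := rfl
  rw [hq] at hqne ⊢
  field_simp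
  ring

lemma norm_gradient_eq (f : E6 → ℝ) (x : E6) : ‖gradient f x‖ = ‖fderiv ℝ f x‖ := by
  rw [gradient]
  exact LinearIsometryEquiv.norm_map _ _

lemma integrable_grad_sq {h : E6 → ℝ} (hsm : ContDiff ℝ (⊤ : ℕ∞) h)
    (hsupp : HasCompactSupport h) :
    Integrable (fun x : E6 => ‖gradient h x‖ ^ 2) := by
  have heq : (fun x : E6 => ‖gradient h x‖ ^ 2) = fun x => ‖fderiv ℝ h x‖ ^ 2 :=
    funext fun x => by rw [norm_gradient_eq]
  rw [heq]
  apply Continuous.integrable_of_hasCompactSupport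
  · exact (hsm.continuous_fderiv (by simp)).norm.pow 2
  · exact (hsupp.fderiv (𝕜 := ℝ)).comp_left (g := fun L : E6 →L[ℝ] ℝ => ‖L‖ ^ 2) (by simp)

lemma hcs_sq {h : E6 → ℝ} (hsupp : HasCompactSupport h) :
    HasCompactSupport (fun x : E6 => h x ^ 2) := by
  have heq : (fun x : E6 => h x ^ 2) = h * h := by funext x; simp [sq]
  rw [heq]
  exact hsupp.mul_right

lemma integrable_h_sq {h : E6 → ℝ} (hsm : ContDiff ℝ (⊤ : ℕ∞) h)
    (hsupp : HasCompactSupport h) : Integrable (fun x : E6 => h x ^ 2) :=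
  ((hsm.continuous.pow 2).integrable_of_hasCompactSupport (hcs_sq hsupp))

lemma integrable_W_h_sq {h : E6 → ℝ} (hsm : ContDiff ℝ (⊤ : ℕ∞) h)
    (hsupp : HasCompactSupport h) : Integrable (fun x : E6 => W6 x * h x ^ 2) := by
  apply Continuous.integrable_of_hasCompactSupport
  · exact contDiff_W6.continuous.mul (hsm.continuous.pow 2)
  · exact (hcs_sq hsupp).mul_left

lemma integrable_one_sub_W_h_sq {h : E6 → ℝ} (hsm : ContDiff ℝ (⊤ : ℕ∞) h)
    (hsupp : HasCompactSupport h) :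
    Integrable (fun x : E6 => (1 - W6 x) * h x ^ 2) := by
  apply Continuous.integrable_of_hasCompactSupport
  · exact (continuous_const.sub contDiff_W6.continuous).mul (hsm.continuous.pow 2)
  · exact (hcs_sq hsupp).mul_left

lemma integrable_pd {g : E6 → ℝ} (hg : ContDiff ℝ (⊤ : ℕ∞) g)
    (hgs : HasCompactSupport g) (v : E6) :
    Integrable (fun x : E6 => fderiv ℝ g x v) := by
  apply Continuous.integrable_of_hasCompactSupport
  · exact (hg.continuous_fderiv (by simp)).clm_apply continuous_const
  · exact hgs.fderiv_apply (𝕜 := ℝ) v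

lemma integral_pd {g : E6 → ℝ} (hg : ContDiff ℝ (⊤ : ℕ∞) g)
    (hgs : HasCompactSupport g) (v : E6) :
    ∫ x : E6, fderiv ℝ g x v = 0 := by
  have hfg' : Integrable (fun x : E6 => (1:ℝ) * fderiv ℝ g x v) := by
    simpa only [one_mul] using integrable_pd hg hgs v
  have hfg : Integrable (fun x : E6 => (1:ℝ) * g x) := by
    simpa only [one_mul] using hg.continuous.integrable_of_hasCompactSupport hgs
  have hf'g : Integrable (fun x : E6 => fderiv ℝ (fun _ : E6 => (1:ℝ)) x v * g x) := by
    simp [fderiv_const]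
  have := integral_mul_fderiv_eq_neg_fderiv_mul_of_integrable hf'g hfg' hfg
    (fun x _ => differentiableAt_const 1) (fun x _ => (hg.differentiable (by simp)) x)
  simpa [fderiv_const] using this

lemma integrable_divV {h : E6 → ℝ} (hsm : ContDiff ℝ (⊤ : ℕ∞) h)
    (hsupp : HasCompactSupport h) : Integrable (divV h) := by
  unfold divV
  exact integrable_finset_sum _ fun i _ =>
    integrable_pd (contDiff_Vc hsm i) (hcs_Vc hsupp i) _

lemma integral_divV_zero {h : E6 → ℝ} (hsm : ContDiff ℝ (⊤ : ℕ∞) h)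
    (hsupp : HasCompactSupport h) : ∫ x : E6, divV h x = 0 := by
  unfold divV
  rw [integral_finset_sum _ fun i _ => integrable_pd (contDiff_Vc hsm i) (hcs_Vc hsupp i) _]
  exact Finset.sum_eq_zero fun i _ => integral_pd (contDiff_Vc hsm i) (hcs_Vc hsupp i) _

/-- Nonnegativity of the quadratic form of `−Δ − W`. -/
lemma main_le {h : E6 → ℝ} (hsm : ContDiff ℝ (⊤ : ℕ∞) h) (hsupp : HasCompactSupport h) :
    ∫ x : E6, W6 x * h x ^ 2 ≤ ∫ x : E6, ‖gradient h x‖ ^ 2 := by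
  have hint1 := integrable_grad_sq hsm hsupp
  have hint2 := integrable_W_h_sq hsm hsupp
  have hint3 := integrable_divV hsm hsupp
  have h0 : 0 ≤ ∫ x : E6, (‖gradient h x‖ ^ 2 - W6 x * h x ^ 2 - divV h x) := by
    apply integral_nonneg
    intro x
    have := key hsm x
    simp only [Pi.zero_apply]
    rw [this]
    positivity
  have e1 : ∫ x : E6, (‖gradient h x‖ ^ 2 - W6 x * h x ^ 2 - divV h x)
      = (∫ x : E6, (‖gradient h x‖ ^ 2 - W6 x * h x ^ 2)) - ∫ x : E6, divV h x :=
    integral_sub (hint1.sub hint2) hint3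
  have e2 : ∫ x : E6, (‖gradient h x‖ ^ 2 - W6 x * h x ^ 2)
      = (∫ x : E6, ‖gradient h x‖ ^ 2) - ∫ x : E6, W6 x * h x ^ 2 :=
    integral_sub hint1 hint2
  rw [e1, e2, integral_divV_zero hsm hsupp] at h0
  linarith

/-- Strict positivity of `∫ (1−W) h²`. -/
lemma strict {h : E6 → ℝ} (hsm : ContDiff ℝ (⊤ : ℕ∞) h) (hsupp : HasCompactSupport h)
    (hne : h ≠ 0) : 0 < ∫ x : E6, (1 - W6 x) * h x ^ 2 := by
  have hnn : ∀ x : E6, 0 ≤ (1 - W6 x) * h x ^ 2 := fun x =>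
    mul_nonneg (by linarith [W6_le_one x]) (sq_nonneg _)
  rw [integral_pos_iff_support_of_nonneg hnn (integrable_one_sub_W_h_sq hsm hsupp)]
  have hopen : IsOpen {y : E6 | h y ≠ 0} :=
    isOpen_compl_singleton.preimage hsm.continuous
  have hne' : {y : E6 | h y ≠ 0}.Nonempty := by
    rcases Function.ne_iff.mp hne with ⟨y, hy⟩
    exact ⟨y, hy⟩
  have hpos : 0 < volume {y : E6 | h y ≠ 0} := hopen.measure_pos volume hne'
  have hsub : {y : E6 | h y ≠ 0} \ {0} ⊆
      Function.support (fun x : E6 => (1 - W6 x) * h x ^ 2) := by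
    rintro y ⟨hy1, hy2⟩
    have hW : W6 y < 1 := W6_lt_one (by simpa using hy2)
    have hsq : 0 < h y ^ 2 :=
      lt_of_le_of_ne (sq_nonneg _) (Ne.symm (pow_ne_zero 2 hy1))
    exact (mul_pos (by linarith) hsq).ne'
  calc (0 : ENNReal) < volume ({y : E6 | h y ≠ 0} \ {0}) := by
        rwa [measure_diff_null (measure_singleton 0)]
    _ ≤ volume (Function.support (fun x : E6 => (1 - W6 x) * h x ^ 2)) :=
        measure_mono hsub

end Stmt6Aux

/-- For every nonzero `h ∈ C_c^∞(ℝ⁶)`, `∫ (|∇h|² + h²) > 2∫ W·h²`; i.e. the quadratic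
form of `−Δ − 2W + 1` is positive definite, expressing that the negative eigenvalue
`−ν²` of `L = −Δ − 2W` satisfies `ν < 1`. -/
theorem stmt6 (h : E6 → ℝ) (hsm : ContDiff ℝ (⊤ : ℕ∞) h)
    (hsupp : HasCompactSupport h) (hne : h ≠ 0) :
    2 * ∫ x : E6, W6 x * (h x) ^ 2 < ∫ x : E6, (‖gradient h x‖ ^ 2 + (h x) ^ 2) := by
  have hint_g := Stmt6Aux.integrable_grad_sq hsm hsupp
  have hint_h2 := Stmt6Aux.integrable_h_sq hsm hsupp
  have hint_W := Stmt6Aux.integrable_W_h_sq hsm hsupp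
  have hle := Stmt6Aux.main_le hsm hsupp
  have hstrict := Stmt6Aux.strict hsm hsupp hne
  have hsplit : ∫ x : E6, (‖gradient h x‖ ^ 2 + h x ^ 2)
      = (∫ x : E6, ‖gradient h x‖ ^ 2) + ∫ x : E6, h x ^ 2 :=
    integral_add hint_g hint_h2
  have hdiff : ∫ x : E6, (1 - W6 x) * h x ^ 2
      = (∫ x : E6, h x ^ 2) - ∫ x : E6, W6 x * h x ^ 2 := by
    rw [← integral_sub hint_h2 hint_W]
    congr 1
    funext x
    ring
  rw [hsplit]
  rw [hdiff] at hstrict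
  linarith

end
end

section
/- There exists a universal constant C > 0 such that for every c > 0 and R > 0 there exists a function q : (0,∞) → ℝ of class C³ with locally Lipschitz third derivative, smooth outside a finite set S of points, an R̃ > R, and: (P1) q(r) = r²/2 for r ≤ R; (P2) q(r) is constant for r ≥ R̃; (P3) |q'(r)| ≤ C·r and |q''(r)| ≤ C for all r > 0 (with C independent of c and R); (P4) q''(r) ≥ −c and q'(r)/r ≥ −c for all r > 0; (P5) ((d²/dr² + (1/r)·d/dr)² q)(r) ≤ c·r^{−2} for all r ∉ S; (P6) | r·( q'(r)/r )' | ≤ c for all r > 0. -/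
open Real Set Filter Topology


namespace Stmt13aux

/-- Glue two one-sided derivative formulas. -/
theorem hasDerivAt_glue {f g₁ g₂ : ℝ → ℝ} {a y b c : ℝ} (hb : b < a) (hc : a < c)
    (H₁ : Set.EqOn f g₁ (Icc b a)) (H₂ : Set.EqOn f g₂ (Icc a c))
    (d₁ : HasDerivAt g₁ y a) (d₂ : HasDerivAt g₂ y a) : HasDerivAt f y a := by
  have h₁ : HasDerivWithinAt f y (Iic a) a := by
    have h := (d₁.hasDerivWithinAt (s := Icc b a)).congr H₁ (H₁ ⟨hb.le, le_refl a⟩)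
    exact h.mono_of_mem_nhdsWithin (Icc_mem_nhdsLE_of_mem ⟨hb, le_refl a⟩)
  have h₂ : HasDerivWithinAt f y (Ici a) a := by
    have h := (d₂.hasDerivWithinAt (s := Icc a c)).congr H₂ (H₂ ⟨le_refl a, hc.le⟩)
    exact h.mono_of_mem_nhdsWithin (Icc_mem_nhdsGE_of_mem ⟨le_refl a, hc⟩)
  have h := h₁.union h₂
  rwa [Iic_union_Ici, hasDerivWithinAt_univ] at h

theorem hasDerivAt_of_eqOn_Ioo {f g : ℝ → ℝ} {u v t y : ℝ} (hu : u < t) (hv : t < v)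
    (H : Set.EqOn f g (Ioo u v)) (d : HasDerivAt g y t) : HasDerivAt f y t :=
  d.congr_of_eventuallyEq (Filter.eventuallyEq_of_mem (Ioo_mem_nhds hu hv) H)

/-- Five-piece piecewise function with junctions `0, 1, T-1, T`. -/
noncomputable def pw (T : ℝ) (f0 f1 f2 f3 f4 : ℝ → ℝ) (t : ℝ) : ℝ :=
  if t ≤ 0 then f0 t else if t ≤ 1 then f1 t else if t ≤ T - 1 then f2 t
    else if t ≤ T then f3 t else f4 t

theorem pw_eq0 {T : ℝ} {f0 f1 f2 f3 f4 : ℝ → ℝ} {t : ℝ} (h : t ≤ 0) :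
    pw T f0 f1 f2 f3 f4 t = f0 t := by simp [pw, h]

theorem pw_eq1 {T : ℝ} {f0 f1 f2 f3 f4 : ℝ → ℝ} {t : ℝ} (h0 : ¬ t ≤ 0) (h1 : t ≤ 1) :
    pw T f0 f1 f2 f3 f4 t = f1 t := by simp [pw, h0, h1]

theorem pw_eq2 {T : ℝ} {f0 f1 f2 f3 f4 : ℝ → ℝ} {t : ℝ} (h0 : ¬ t ≤ 0) (h1 : ¬ t ≤ 1)
    (h2 : t ≤ T - 1) : pw T f0 f1 f2 f3 f4 t = f2 t := by simp [pw, h0, h1, h2]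

theorem pw_eq3 {T : ℝ} {f0 f1 f2 f3 f4 : ℝ → ℝ} {t : ℝ} (h0 : ¬ t ≤ 0) (h1 : ¬ t ≤ 1)
    (h2 : ¬ t ≤ T - 1) (h3 : t ≤ T) : pw T f0 f1 f2 f3 f4 t = f3 t := by
  simp [pw, h0, h1, h2, h3]

theorem pw_eq4 {T : ℝ} {f0 f1 f2 f3 f4 : ℝ → ℝ} {t : ℝ} (h0 : ¬ t ≤ 0) (h1 : ¬ t ≤ 1)
    (h2 : ¬ t ≤ T - 1) (h3 : ¬ t ≤ T) : pw T f0 f1 f2 f3 f4 t = f4 t := by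
  simp [pw, h0, h1, h2, h3]

theorem pw_hasDerivAt {T : ℝ} (hT : 2 < T) {f0 f1 f2 f3 f4 g0 g1 g2 g3 g4 : ℝ → ℝ}
    (h0 : ∀ t, HasDerivAt f0 (g0 t) t) (h1 : ∀ t, HasDerivAt f1 (g1 t) t)
    (h2 : ∀ t, HasDerivAt f2 (g2 t) t) (h3 : ∀ t, HasDerivAt f3 (g3 t) t)
    (h4 : ∀ t, HasDerivAt f4 (g4 t) t)
    (e0 : f0 0 = f1 0) (d0 : g0 0 = g1 0) (e1 : f1 1 = f2 1) (d1 : g1 1 = g2 1)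
    (e2 : f2 (T-1) = f3 (T-1)) (d2 : g2 (T-1) = g3 (T-1))
    (e3 : f3 T = f4 T) (d3 : g3 T = g4 T) (t : ℝ) :
    HasDerivAt (pw T f0 f1 f2 f3 f4) (pw T g0 g1 g2 g3 g4 t) t := by
  have h1T : (1:ℝ) < T - 1 := by linarith
  have hT1 : T - 1 < T := by linarith
  -- EqOn facts
  have E0 : Set.EqOn (pw T f0 f1 f2 f3 f4) f0 (Icc (-1 : ℝ) 0) := fun x hx => pw_eq0 hx.2
  have E1 : Set.EqOn (pw T f0 f1 f2 f3 f4) f1 (Icc (0:ℝ) 1) := by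
    intro x hx
    rcases eq_or_lt_of_le hx.1 with h | h
    · rw [pw_eq0 (le_of_eq h.symm), ← h, e0]
    · exact pw_eq1 (not_le.2 h) hx.2
  have E2 : Set.EqOn (pw T f0 f1 f2 f3 f4) f2 (Icc (1:ℝ) (T-1)) := by
    intro x hx
    rcases eq_or_lt_of_le hx.1 with h | h
    · rw [pw_eq1 (by linarith [h.symm ▸ hx.1] : ¬ x ≤ 0) (le_of_eq h.symm), ← h, e1]
    · exact pw_eq2 (by linarith) (not_le.2 h) hx.2
  have E3 : Set.EqOn (pw T f0 f1 f2 f3 f4) f3 (Icc (T-1) T) := by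
    intro x hx
    rcases eq_or_lt_of_le hx.1 with h | h
    · rw [pw_eq2 (by linarith) (by linarith) (le_of_eq h.symm), ← h, e2]
    · exact pw_eq3 (by linarith) (by linarith) (not_le.2 h) hx.2
  have E4 : Set.EqOn (pw T f0 f1 f2 f3 f4) f4 (Icc T (T+1)) := by
    intro x hx
    rcases eq_or_lt_of_le hx.1 with h | h
    · rw [pw_eq3 (by linarith) (by linarith) (by linarith) (le_of_eq h.symm), ← h, e3]
    · exact pw_eq4 (by linarith) (by linarith) (by linarith) (not_le.2 h)
  rcases lt_trichotomy t 0 with ht | ht | ht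
  · rw [pw_eq0 ht.le]
    exact hasDerivAt_of_eqOn_Ioo (show t - 1 < t by linarith) ht
      (fun x hx => pw_eq0 hx.2.le) (h0 t)
  · subst ht
    rw [pw_eq0 (le_refl 0)]
    exact hasDerivAt_glue (show (-1:ℝ) < 0 by norm_num) one_pos E0 E1 (h0 0) (d0 ▸ h1 0)
  rcases lt_trichotomy t 1 with ht1 | ht1 | ht1
  · rw [pw_eq1 (not_le.2 ht) ht1.le]
    exact hasDerivAt_of_eqOn_Ioo ht ht1
      (fun x hx => pw_eq1 (not_le.2 hx.1) hx.2.le) (h1 t)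
  · subst ht1
    rw [pw_eq1 (not_le.2 ht) (le_refl 1)]
    exact hasDerivAt_glue one_pos h1T E1 E2 (h1 1) (d1 ▸ h2 1)
  rcases lt_trichotomy t (T-1) with ht2 | ht2 | ht2
  · rw [pw_eq2 (by linarith) (not_le.2 ht1) ht2.le]
    exact hasDerivAt_of_eqOn_Ioo ht1 ht2
      (fun x hx => pw_eq2 (by linarith [hx.1]) (not_le.2 hx.1) hx.2.le) (h2 t)
  · subst ht2  -- t = T - 1 : careful subst direction
    rw [pw_eq2 (by linarith) (not_le.2 ht1) (le_refl _)]
    exact hasDerivAt_glue h1T hT1 E2 E3 (h2 (T-1)) (d2 ▸ h3 (T-1))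
  rcases lt_trichotomy t T with ht3 | ht3 | ht3
  · rw [pw_eq3 (by linarith) (by linarith) (not_le.2 ht2) ht3.le]
    exact hasDerivAt_of_eqOn_Ioo ht2 ht3
      (fun x hx => pw_eq3 (by linarith [hx.1]) (by linarith [hx.1]) (not_le.2 hx.1) hx.2.le)
      (h3 t)
  · rw [ht3, pw_eq3 (by linarith) (by linarith) (by rw [ht3] at ht2; exact not_le.2 ht2) (le_refl _)]
    exact hasDerivAt_glue hT1 (lt_add_one T) E3 E4 (h3 T) (d3 ▸ h4 T)
  · rw [pw_eq4 (by linarith) (by linarith) (by linarith) (not_le.2 ht3)]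
    exact hasDerivAt_of_eqOn_Ioo ht3 (lt_add_one t)
      (fun x hx => pw_eq4 (by linarith [hx.1]) (by linarith [hx.1]) (by linarith [hx.1])
        (not_le.2 hx.1)) (h4 t)


noncomputable def bB (ε t : ℝ) : ℝ := 1 - ε/2 * (t - Real.sin (π*t)/π)
noncomputable def bB1 (ε t : ℝ) : ℝ := -(ε/2) * (1 - Real.cos (π*t))
noncomputable def bB2 (ε t : ℝ) : ℝ := -(ε*π/2) * Real.sin (π*t)
noncomputable def bB3 (ε t : ℝ) : ℝ := -(ε*π^2/2) * Real.cos (π*t)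
noncomputable def bC (ε t : ℝ) : ℝ := 1 + ε/2 - ε*t
noncomputable def bD (ε T t : ℝ) : ℝ := ε/2 * ((T - t) - Real.sin (π*(t-(T-1)))/π)
noncomputable def bD1 (ε T t : ℝ) : ℝ := -(ε/2) * (1 + Real.cos (π*(t-(T-1))))
noncomputable def bD2 (ε T t : ℝ) : ℝ := ε*π/2 * Real.sin (π*(t-(T-1)))
noncomputable def bD3 (ε T t : ℝ) : ℝ := ε*π^2/2 * Real.cos (π*(t-(T-1)))

theorem hasDerivAt_sin_lin (a t : ℝ) :
    HasDerivAt (fun t => Real.sin (π*(t-a))) (π * Real.cos (π*(t-a))) t := by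
  have h1 : HasDerivAt (fun t : ℝ => π*(t-a)) π t := by
    simpa using ((hasDerivAt_id t).sub_const a).const_mul π
  exact ((Real.hasDerivAt_sin (π*(t-a))).comp t h1).congr_deriv (mul_comm _ _)

theorem hasDerivAt_cos_lin (a t : ℝ) :
    HasDerivAt (fun t => Real.cos (π*(t-a))) (-(π * Real.sin (π*(t-a)))) t := by
  have h1 : HasDerivAt (fun t : ℝ => π*(t-a)) π t := by
    simpa using ((hasDerivAt_id t).sub_const a).const_mul π
  have := (Real.hasDerivAt_cos (π*(t-a))).comp t h1
  exact this.congr_deriv (by ring)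

theorem hbB (ε t : ℝ) : HasDerivAt (bB ε) (bB1 ε t) t := by
  have hs : HasDerivAt (fun t => Real.sin (π*(t-0))) (π * Real.cos (π*(t-0))) t :=
    hasDerivAt_sin_lin 0 t
  simp only [sub_zero] at hs
  have h : HasDerivAt (fun t : ℝ => t - Real.sin (π*t)/π) (1 - (π * Real.cos (π*t))/π) t :=
    (hasDerivAt_id t).sub (hs.div_const π)
  have h2 := (h.const_mul (ε/2)).const_sub 1
  have hπ := Real.pi_ne_zero
  refine h2.congr_deriv ?_
  unfold bB1; field_simp; try ring

theorem hbB1 (ε t : ℝ) : HasDerivAt (bB1 ε) (bB2 ε t) t := by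
  have hc : HasDerivAt (fun t => Real.cos (π*(t-0))) (-(π * Real.sin (π*(t-0)))) t :=
    hasDerivAt_cos_lin 0 t
  simp only [sub_zero] at hc
  have h := ((hc.const_sub 1).const_mul (-(ε/2)))
  refine h.congr_deriv ?_
  simp [bB2]; ring

theorem hbB2 (ε t : ℝ) : HasDerivAt (bB2 ε) (bB3 ε t) t := by
  have hs : HasDerivAt (fun t => Real.sin (π*(t-0))) (π * Real.cos (π*(t-0))) t :=
    hasDerivAt_sin_lin 0 t
  simp only [sub_zero] at hs
  have h := hs.const_mul (-(ε*π/2))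
  refine h.congr_deriv ?_
  simp [bB3]; ring

theorem hbC (ε t : ℝ) : HasDerivAt (bC ε) (-ε) t := by
  have h := ((hasDerivAt_id t).const_mul ε).const_sub (1 + ε/2)
  refine h.congr_deriv ?_
  simp

theorem hbD (ε T t : ℝ) : HasDerivAt (bD ε T) (bD1 ε T t) t := by
  have hs := hasDerivAt_sin_lin (T-1) t
  have h : HasDerivAt (fun t : ℝ => (T - t) - Real.sin (π*(t-(T-1)))/π)
      (-1 - (π * Real.cos (π*(t-(T-1))))/π) t :=
    ((hasDerivAt_id t).const_sub T).sub (hs.div_const π)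
  have h2 := h.const_mul (ε/2)
  have hπ := Real.pi_ne_zero
  refine h2.congr_deriv ?_
  unfold bD1; field_simp; try ring

theorem hbD1 (ε T t : ℝ) : HasDerivAt (bD1 ε T) (bD2 ε T t) t := by
  have hc := hasDerivAt_cos_lin (T-1) t
  have h := (hc.const_add 1).const_mul (-(ε/2))
  refine h.congr_deriv ?_
  simp [bD2]; ring

theorem hbD2 (ε T t : ℝ) : HasDerivAt (bD2 ε T) (bD3 ε T t) t := by
  have hs := hasDerivAt_sin_lin (T-1) t
  have h := hs.const_mul (ε*π/2)
  refine h.congr_deriv ?_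
  simp [bD3]; ring

-- junction values
theorem jB0 (ε : ℝ) : bB ε 0 = 1 := by simp [bB]
theorem jB1_0 (ε : ℝ) : bB1 ε 0 = 0 := by simp [bB1]
theorem jB2_0 (ε : ℝ) : bB2 ε 0 = 0 := by simp [bB2]
theorem jB_1 (ε : ℝ) : bB ε 1 = bC ε 1 := by simp [bB, bC, Real.sin_pi]; ring
theorem jB1_1 (ε : ℝ) : bB1 ε 1 = -ε := by simp [bB1, Real.cos_pi]; ring
theorem jB2_1 (ε : ℝ) : bB2 ε 1 = 0 := by simp [bB2, Real.sin_pi]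
theorem jC_T1 {ε T : ℝ} (hTe : ε * (T-1) = 1) : bC ε (T-1) = bD ε T (T-1) := by
  simp [bC, bD]; nlinarith [hTe]
theorem jD1_T1 (ε T : ℝ) : bD1 ε T (T-1) = -ε := by simp [bD1]; ring
theorem jD2_T1 (ε T : ℝ) : bD2 ε T (T-1) = 0 := by simp [bD2]
theorem jD_T (ε T : ℝ) : bD ε T T = 0 := by
  have : π*(T-(T-1)) = π := by ring_nf
  simp [bD, this, Real.sin_pi]
theorem jD1_T (ε T : ℝ) : bD1 ε T T = 0 := by
  have : π*(T-(T-1)) = π := by ring_nf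
  simp [bD1, this, Real.cos_pi]
theorem jD2_T (ε T : ℝ) : bD2 ε T T = 0 := by
  have : π*(T-(T-1)) = π := by ring_nf
  simp [bD2, this, Real.sin_pi]


theorem pw_hasDerivAt_interior {T : ℝ} (hT : 2 < T) {f0 f1 f2 f3 f4 g0 g1 g2 g3 g4 : ℝ → ℝ}
    (h0 : ∀ t, HasDerivAt f0 (g0 t) t) (h1 : ∀ t, HasDerivAt f1 (g1 t) t)
    (h2 : ∀ t, HasDerivAt f2 (g2 t) t) (h3 : ∀ t, HasDerivAt f3 (g3 t) t)
    (h4 : ∀ t, HasDerivAt f4 (g4 t) t) (t : ℝ)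
    (n0 : t ≠ 0) (n1 : t ≠ 1) (n2 : t ≠ T - 1) (n3 : t ≠ T) :
    HasDerivAt (pw T f0 f1 f2 f3 f4) (pw T g0 g1 g2 g3 g4 t) t := by
  rcases lt_trichotomy t 0 with ht | ht | ht
  · rw [pw_eq0 ht.le]
    exact hasDerivAt_of_eqOn_Ioo (show t - 1 < t by linarith) ht
      (fun x hx => pw_eq0 hx.2.le) (h0 t)
  · exact absurd ht n0
  rcases lt_trichotomy t 1 with ht1 | ht1 | ht1
  · rw [pw_eq1 (not_le.2 ht) ht1.le]
    exact hasDerivAt_of_eqOn_Ioo ht ht1 (fun x hx => pw_eq1 (not_le.2 hx.1) hx.2.le) (h1 t)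
  · exact absurd ht1 n1
  rcases lt_trichotomy t (T-1) with ht2 | ht2 | ht2
  · rw [pw_eq2 (by linarith) (not_le.2 ht1) ht2.le]
    exact hasDerivAt_of_eqOn_Ioo ht1 ht2
      (fun x hx => pw_eq2 (by linarith [hx.1]) (not_le.2 hx.1) hx.2.le) (h2 t)
  · exact absurd ht2 n2
  rcases lt_trichotomy t T with ht3 | ht3 | ht3
  · rw [pw_eq3 (by linarith) (by linarith) (not_le.2 ht2) ht3.le]
    exact hasDerivAt_of_eqOn_Ioo ht2 ht3
      (fun x hx => pw_eq3 (by linarith [hx.1]) (by linarith [hx.1]) (not_le.2 hx.1) hx.2.le)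
      (h3 t)
  · exact absurd ht3 n3
  · rw [pw_eq4 (by linarith) (by linarith) (by linarith) (not_le.2 ht3)]
    exact hasDerivAt_of_eqOn_Ioo ht3 (lt_add_one t)
      (fun x hx => pw_eq4 (by linarith [hx.1]) (by linarith [hx.1]) (by linarith [hx.1])
        (not_le.2 hx.1)) (h4 t)

noncomputable def Phi (ε T : ℝ) : ℝ → ℝ := pw T (fun _ => 1) (bB ε) (bC ε) (bD ε T) (fun _ => 0)
noncomputable def Phi1 (ε T : ℝ) : ℝ → ℝ :=
  pw T (fun _ => 0) (bB1 ε) (fun _ => -ε) (bD1 ε T) (fun _ => 0)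
noncomputable def Phi2 (ε T : ℝ) : ℝ → ℝ :=
  pw T (fun _ => 0) (bB2 ε) (fun _ => 0) (bD2 ε T) (fun _ => 0)
noncomputable def Phi3 (ε T : ℝ) : ℝ → ℝ :=
  pw T (fun _ => 0) (bB3 ε) (fun _ => 0) (bD3 ε T) (fun _ => 0)

theorem hPhi {ε T : ℝ} (hT : 2 < T) (hTe : ε * (T-1) = 1) (t : ℝ) :
    HasDerivAt (Phi ε T) (Phi1 ε T t) t :=
  pw_hasDerivAt hT (fun t => hasDerivAt_const t 1) (hbB ε) (hbC ε) (hbD ε T)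
    (fun t => hasDerivAt_const t 0)
    (jB0 ε).symm (jB1_0 ε).symm (jB_1 ε) (jB1_1 ε) (jC_T1 hTe) (jD1_T1 ε T).symm
    (jD_T ε T) (jD1_T ε T) t

theorem hPhi1 {ε T : ℝ} (hT : 2 < T) (t : ℝ) : HasDerivAt (Phi1 ε T) (Phi2 ε T t) t :=
  pw_hasDerivAt hT (fun t => hasDerivAt_const t 0) (hbB1 ε) (fun t => hasDerivAt_const t (-ε))
    (hbD1 ε T) (fun t => hasDerivAt_const t 0)
    (jB1_0 ε).symm (jB2_0 ε).symm (jB1_1 ε) (jB2_1 ε) (jD1_T1 ε T).symm (jD2_T1 ε T).symm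
    (jD1_T ε T) (jD2_T ε T) t

theorem hPhi2 {ε T : ℝ} (hT : 2 < T) {t : ℝ}
    (n0 : t ≠ 0) (n1 : t ≠ 1) (n2 : t ≠ T - 1) (n3 : t ≠ T) :
    HasDerivAt (Phi2 ε T) (Phi3 ε T t) t :=
  pw_hasDerivAt_interior hT (fun t => hasDerivAt_const t 0) (hbB2 ε)
    (fun t => hasDerivAt_const t 0) (hbD2 ε T) (fun t => hasDerivAt_const t 0) t n0 n1 n2 n3

-- value lemmas
theorem Phi_le0 {ε T t : ℝ} (h : t ≤ 0) : Phi ε T t = 1 := pw_eq0 h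
theorem Phi1_le0 {ε T t : ℝ} (h : t ≤ 0) : Phi1 ε T t = 0 := pw_eq0 h
theorem Phi2_le0 {ε T t : ℝ} (h : t ≤ 0) : Phi2 ε T t = 0 := pw_eq0 h

theorem Phi_geT {ε T t : ℝ} (hT : 2 < T) (h : T ≤ t) : Phi ε T t = 0 := by
  rcases eq_or_lt_of_le h with h' | h'
  · rw [← h', Phi, pw_eq3 (by linarith) (by linarith) (by linarith) le_rfl, jD_T]
  · exact pw_eq4 (by linarith) (by linarith) (by linarith) (not_le.2 h')
theorem Phi1_geT {ε T t : ℝ} (hT : 2 < T) (h : T ≤ t) : Phi1 ε T t = 0 := by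
  rcases eq_or_lt_of_le h with h' | h'
  · rw [← h', Phi1, pw_eq3 (by linarith) (by linarith) (by linarith) le_rfl, jD1_T]
  · exact pw_eq4 (by linarith) (by linarith) (by linarith) (not_le.2 h')
theorem Phi2_geT {ε T t : ℝ} (hT : 2 < T) (h : T ≤ t) : Phi2 ε T t = 0 := by
  rcases eq_or_lt_of_le h with h' | h'
  · rw [← h', Phi2, pw_eq3 (by linarith) (by linarith) (by linarith) le_rfl, jD2_T]
  · exact pw_eq4 (by linarith) (by linarith) (by linarith) (not_le.2 h')

theorem Phi1_on01 {ε T t : ℝ} (h0 : 0 ≤ t) (h1 : t ≤ 1) : Phi1 ε T t = bB1 ε t := by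
  rcases eq_or_lt_of_le h0 with h' | h'
  · rw [← h', Phi1, pw_eq0 le_rfl, jB1_0]
  · exact pw_eq1 (not_le.2 h') h1
theorem Phi2_on01 {ε T t : ℝ} (h0 : 0 ≤ t) (h1 : t ≤ 1) : Phi2 ε T t = bB2 ε t := by
  rcases eq_or_lt_of_le h0 with h' | h'
  · rw [← h', Phi2, pw_eq0 le_rfl, jB2_0]
  · exact pw_eq1 (not_le.2 h') h1
theorem Phi1_onC {ε T t : ℝ} (h0 : 1 ≤ t) (h1 : t ≤ T - 1) : Phi1 ε T t = -ε := by
  rcases eq_or_lt_of_le h0 with h' | h'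
  · rw [← h', Phi1, pw_eq1 (by norm_num) le_rfl, jB1_1]
  · exact pw_eq2 (by linarith) (not_le.2 h') h1
theorem Phi2_onC {ε T t : ℝ} (h0 : 1 ≤ t) (h1 : t ≤ T - 1) : Phi2 ε T t = 0 := by
  rcases eq_or_lt_of_le h0 with h' | h'
  · rw [← h', Phi2, pw_eq1 (by norm_num) le_rfl, jB2_1]
  · exact pw_eq2 (by linarith) (not_le.2 h') h1
theorem Phi1_onD {ε T t : ℝ} (hT : 2 < T) (h0 : T - 1 ≤ t) (h1 : t ≤ T) :
    Phi1 ε T t = bD1 ε T t := by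
  rcases eq_or_lt_of_le h0 with h' | h'
  · rw [← h', Phi1, pw_eq2 (by linarith) (by linarith) le_rfl, jD1_T1]
  · exact pw_eq3 (by linarith) (by linarith) (not_le.2 h') h1
theorem Phi2_onD {ε T t : ℝ} (hT : 2 < T) (h0 : T - 1 ≤ t) (h1 : t ≤ T) :
    Phi2 ε T t = bD2 ε T t := by
  rcases eq_or_lt_of_le h0 with h' | h'
  · rw [← h', Phi2, pw_eq2 (by linarith) (by linarith) le_rfl, jD2_T1]
  · exact pw_eq3 (by linarith) (by linarith) (not_le.2 h') h1

-- continuity of Phi2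
theorem contB2 (ε : ℝ) : Continuous (bB2 ε) := by unfold bB2; fun_prop
theorem contD2 (ε T : ℝ) : Continuous (bD2 ε T) := by unfold bD2; fun_prop

theorem Phi2_cont {ε T : ℝ} (hT : 2 < T) : Continuous (Phi2 ε T) := by
  have c4 : Continuous (fun t => if t ≤ T then bD2 ε T t else 0) :=
    Continuous.if_le (contD2 ε T) continuous_const continuous_id continuous_const
      (fun x hx => by rw [show x = T from hx]; exact jD2_T ε T)
  have c3 : Continuous (fun t => if t ≤ T - 1 then 0 else if t ≤ T then bD2 ε T t else 0) :=
    Continuous.if_le continuous_const c4 continuous_id continuous_const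
      (fun x hx => by rw [show x = T - 1 from hx, if_pos (by linarith : T - 1 ≤ T), jD2_T1])
  have c2 : Continuous (fun t => if t ≤ 1 then bB2 ε t else
      if t ≤ T - 1 then 0 else if t ≤ T then bD2 ε T t else 0) :=
    Continuous.if_le (contB2 ε) c3 continuous_id continuous_const
      (fun x hx => by rw [show x = (1:ℝ) from hx, jB2_1, if_pos (by linarith : (1:ℝ) ≤ T - 1)])
  have c1 := Continuous.if_le continuous_const c2 continuous_id continuous_const
      (fun x hx => by rw [show x = (0:ℝ) from hx, if_pos (by norm_num : (0:ℝ) ≤ 1), jB2_0])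
  unfold Phi2 pw; exact c1

-- smoothness of branches and of Phi off junctions
theorem cdB (ε : ℝ) : ContDiff ℝ ((⊤:ℕ∞) : WithTop ℕ∞) (bB ε) := by
  unfold bB
  exact contDiff_const.sub (contDiff_const.mul (contDiff_id.sub
    ((Real.contDiff_sin.comp (contDiff_const.mul contDiff_id)).div_const π)))
theorem cdC (ε : ℝ) : ContDiff ℝ ((⊤:ℕ∞) : WithTop ℕ∞) (bC ε) := by unfold bC; fun_prop
theorem cdD (ε T : ℝ) : ContDiff ℝ ((⊤:ℕ∞) : WithTop ℕ∞) (bD ε T) := by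
  unfold bD
  exact contDiff_const.mul ((contDiff_const.sub contDiff_id).sub
    ((Real.contDiff_sin.comp (contDiff_const.mul (contDiff_id.sub contDiff_const))).div_const π))

theorem hPhiSm {ε T : ℝ} (hT : 2 < T) {t : ℝ}
    (n0 : t ≠ 0) (n1 : t ≠ 1) (n2 : t ≠ T - 1) (n3 : t ≠ T) :
    ContDiffAt ℝ ((⊤:ℕ∞) : WithTop ℕ∞) (Phi ε T) t := by
  rcases lt_trichotomy t 0 with ht | ht | ht
  · exact contDiffAt_const.congr_of_eventuallyEq
      (Filter.eventuallyEq_of_mem (Iio_mem_nhds ht) (fun x hx => pw_eq0 (le_of_lt hx)))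
  · exact absurd ht n0
  rcases lt_trichotomy t 1 with ht1 | ht1 | ht1
  · exact (cdB ε).contDiffAt.congr_of_eventuallyEq
      (Filter.eventuallyEq_of_mem (Ioo_mem_nhds ht ht1)
        (fun x hx => pw_eq1 (not_le.2 hx.1) hx.2.le))
  · exact absurd ht1 n1
  rcases lt_trichotomy t (T-1) with ht2 | ht2 | ht2
  · exact (cdC ε).contDiffAt.congr_of_eventuallyEq
      (Filter.eventuallyEq_of_mem (Ioo_mem_nhds ht1 ht2)
        (fun x hx => pw_eq2 (by linarith [hx.1]) (not_le.2 hx.1) hx.2.le))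
  · exact absurd ht2 n2
  rcases lt_trichotomy t T with ht3 | ht3 | ht3
  · exact (cdD ε T).contDiffAt.congr_of_eventuallyEq
      (Filter.eventuallyEq_of_mem (Ioo_mem_nhds ht2 ht3)
        (fun x hx => pw_eq3 (by linarith [hx.1]) (by linarith [hx.1]) (not_le.2 hx.1) hx.2.le))
  · exact absurd ht3 n3
  · exact contDiffAt_const.congr_of_eventuallyEq
      (Filter.eventuallyEq_of_mem (Ioi_mem_nhds ht3)
        (fun x hx => pw_eq4 (by linarith [mem_Ioi.1 hx]) (by linarith [mem_Ioi.1 hx])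
          (by linarith [mem_Ioi.1 hx]) (not_le.2 hx)))

section Ineq
variable {ε T : ℝ}

theorem I1 (hε : 0 < ε) (hε1 : ε ≤ 1/9) (hT : 2 < T) (hTe : ε * (T-1) = 1) (t : ℝ) :
    0 ≤ Phi ε T t ∧ Phi ε T t ≤ 1 := by
  have hπ := Real.pi_pos
  have hπ3 := Real.pi_gt_three
  unfold Phi pw bB bC bD
  split_ifs with h1 h2 h3 h4
  · norm_num
  · push_neg at h1
    have hst : Real.sin (π*t) ≤ π*t := Real.sin_le (by nlinarith)
    have hs1 : -1 ≤ Real.sin (π*t)/π := by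
      rw [le_div_iff₀ hπ]; nlinarith [Real.neg_one_le_sin (π*t)]
    have hs2 : Real.sin (π*t)/π ≤ t := by rw [div_le_iff₀ hπ]; nlinarith
    constructor
    · nlinarith
    · nlinarith
  · push_neg at h1 h2
    constructor
    · nlinarith
    · nlinarith
  · push_neg at h1 h2 h3
    have harg : 0 ≤ π - π*(t-(T-1)) := by nlinarith
    have hsin_le : Real.sin (π*(t-(T-1))) ≤ π - π*(t-(T-1)) := by
      have h := Real.sin_le harg
      rwa [Real.sin_pi_sub] at h
    have hs2 : Real.sin (π*(t-(T-1)))/π ≤ T - t := by rw [div_le_iff₀ hπ]; nlinarith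
    have hs1 : -1 ≤ Real.sin (π*(t-(T-1)))/π := by
      rw [le_div_iff₀ hπ]; nlinarith [Real.neg_one_le_sin (π*(t-(T-1)))]
    constructor
    · nlinarith
    · nlinarith
  · norm_num

theorem I2 (hε : 0 < ε) (t : ℝ) : -ε ≤ Phi1 ε T t ∧ Phi1 ε T t ≤ 0 := by
  unfold Phi1 pw bB1 bD1
  split_ifs with h1 h2 h3 h4 <;> beta_reduce
  · constructor <;> linarith
  · constructor <;>
      nlinarith [Real.neg_one_le_cos (π*t), Real.cos_le_one (π*t)]
  · constructor <;> linarith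
  · constructor <;>
      nlinarith [Real.neg_one_le_cos (π*(t-(T-1))), Real.cos_le_one (π*(t-(T-1)))]
  · constructor <;> linarith

theorem I3 (hε : 0 < ε) (t : ℝ) : 2 * Phi2 ε T t + Phi3 ε T t ≤ 9 * ε := by
  have hπ := Real.pi_pos
  have hπ3 := Real.pi_gt_three
  have hπ315 := Real.pi_lt_d2
  unfold Phi2 Phi3 pw bB2 bB3 bD2 bD3
  split_ifs with h1 h2 h3 h4 <;> beta_reduce
  · linarith
  · nlinarith [Real.neg_one_le_sin (π*t), Real.neg_one_le_cos (π*t),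
      Real.sin_le_one (π*t), Real.cos_le_one (π*t),
      mul_pos hε hπ, mul_pos (mul_pos hε hπ) hπ]
  · linarith
  · nlinarith [Real.neg_one_le_sin (π*(t-(T-1))), Real.neg_one_le_cos (π*(t-(T-1))),
      Real.sin_le_one (π*(t-(T-1))), Real.cos_le_one (π*(t-(T-1))),
      mul_pos hε hπ, mul_pos (mul_pos hε hπ) hπ]
  · linarith

end Ineq
section Rlevel

noncomputable def Lg (R r : ℝ) : ℝ := Real.log r - Real.log R
noncomputable def Q1 (ε T R r : ℝ) : ℝ := r * Phi ε T (Lg R r)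
noncomputable def Q2 (ε T R r : ℝ) : ℝ := Phi ε T (Lg R r) + Phi1 ε T (Lg R r)
noncomputable def Q3 (ε T R r : ℝ) : ℝ := (Phi1 ε T (Lg R r) + Phi2 ε T (Lg R r)) / r
noncomputable def Q4 (ε T R r : ℝ) : ℝ := (Phi3 ε T (Lg R r) - Phi1 ε T (Lg R r)) / r^2

variable {ε T R r : ℝ}

theorem hLg (hr : r ≠ 0) : HasDerivAt (Lg R) r⁻¹ r := by
  exact (Real.hasDerivAt_log hr).sub_const (Real.log R)

theorem Lg_le (hR : 0 < R) (hr : 0 < r) {a : ℝ} (h : r ≤ R * Real.exp a) : Lg R r ≤ a := by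
  have h2 : Real.log r ≤ Real.log (R * Real.exp a) :=
    (Real.log_le_log_iff hr (by positivity)).2 h
  rw [Real.log_mul hR.ne' (Real.exp_ne_zero a), Real.log_exp] at h2
  unfold Lg; linarith

theorem Lg_ge (hR : 0 < R) {a : ℝ} (h : R * Real.exp a ≤ r) : a ≤ Lg R r := by
  have hra : (0:ℝ) < R * Real.exp a := by positivity
  have h2 : Real.log (R * Real.exp a) ≤ Real.log r :=
    (Real.log_le_log_iff hra (lt_of_lt_of_le hra h)).2 h
  rw [Real.log_mul hR.ne' (Real.exp_ne_zero a), Real.log_exp] at h2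
  unfold Lg; linarith

theorem Lg_ne (hR : 0 < R) (hr : 0 < r) {a : ℝ} (h : r ≠ R * Real.exp a) : Lg R r ≠ a := by
  intro he
  apply h
  have : Real.log r = Real.log R + a := by unfold Lg at he; linarith
  rw [← Real.exp_log hr, this, Real.exp_add, Real.exp_log hR]

theorem Lg_nonpos (hR : 0 < R) (hr : 0 < r) (h : r ≤ R) : Lg R r ≤ 0 :=
  Lg_le hR hr (by simpa using h)

theorem hQ1 (hT : 2 < T) (hTe : ε * (T-1) = 1) (hr : 0 < r) :
    HasDerivAt (Q1 ε T R) (Q2 ε T R r) r := by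
  have hφ : HasDerivAt (fun y => Phi ε T (Lg R y)) (Phi1 ε T (Lg R r) * r⁻¹) r :=
    (hPhi hT hTe (Lg R r)).comp r (hLg hr.ne')
  have h := (hasDerivAt_id r).mul hφ
  refine h.congr_deriv ?_
  unfold Q2; simp only [id]; field_simp

theorem hQ2 (hT : 2 < T) (hTe : ε * (T-1) = 1) (hr : 0 < r) :
    HasDerivAt (Q2 ε T R) (Q3 ε T R r) r := by
  have h1 : HasDerivAt (fun y => Phi ε T (Lg R y)) (Phi1 ε T (Lg R r) * r⁻¹) r :=
    (hPhi hT hTe (Lg R r)).comp r (hLg hr.ne')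
  have h2 : HasDerivAt (fun y => Phi1 ε T (Lg R y)) (Phi2 ε T (Lg R r) * r⁻¹) r :=
    (hPhi1 hT (Lg R r)).comp r (hLg hr.ne')
  have h := h1.add h2
  refine h.congr_deriv ?_
  unfold Q3; try field_simp; try ring

theorem hDL {F : ℝ → ℝ} {y : ℝ} (hF : HasDerivAt F y (Lg R r)) (hr : 0 < r) :
    HasDerivAt (fun x => F (Lg R x) / x) ((y - F (Lg R r)) / r^2) r := by
  have h := (hF.comp r (hLg hr.ne')).div (hasDerivAt_id r) hr.ne'
  refine h.congr_deriv ?_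
  simp only [id, Function.comp]
  try field_simp
  try ring

theorem hQ3 (hT : 2 < T) (hr : 0 < r)
    (n0 : Lg R r ≠ 0) (n1 : Lg R r ≠ 1) (n2 : Lg R r ≠ T - 1) (n3 : Lg R r ≠ T) :
    HasDerivAt (Q3 ε T R) (Q4 ε T R r) r := by
  have hF : HasDerivAt (fun t => Phi1 ε T t + Phi2 ε T t)
      (Phi2 ε T (Lg R r) + Phi3 ε T (Lg R r)) (Lg R r) :=
    (hPhi1 hT (Lg R r)).add (hPhi2 hT n0 n1 n2 n3)
  have h := hDL hF hr
  refine h.congr_deriv ?_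
  unfold Q4; ring

theorem contQ1 (hT : 2 < T) (hTe : ε * (T-1) = 1) : ContinuousOn (Q1 ε T R) (Set.Ioi 0) :=
  fun x hx => ((hQ1 hT hTe hx).continuousAt).continuousWithinAt

theorem cLg : ContinuousOn (Lg R) (Set.Ioi 0) := fun x hx =>
  ((Real.continuousAt_log (ne_of_gt hx)).sub continuousAt_const).continuousWithinAt

theorem contQ3 (hT : 2 < T) : ContinuousOn (Q3 ε T R) (Set.Ioi 0) := by
  have cPhi1 : Continuous (Phi1 ε T) :=
    continuous_iff_continuousAt.2 (fun t => (hPhi1 hT t).continuousAt)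
  exact (((cPhi1.comp_continuousOn cLg).add
    ((Phi2_cont hT).comp_continuousOn cLg)).div continuousOn_id
    (fun x hx => ne_of_gt hx))

noncomputable def qf (ε T R : ℝ) (r : ℝ) : ℝ := R^2/2 + ∫ x in R..r, Q1 ε T R x

theorem hqf (hT : 2 < T) (hTe : ε * (T-1) = 1) (hR : 0 < R) (hr : 0 < r) :
    HasDerivAt (qf ε T R) (Q1 ε T R r) r := by
  have hsub : Set.uIcc R r ⊆ Set.Ioi 0 := fun x hx =>
    lt_of_lt_of_le (lt_min hR hr) hx.1
  have hint : IntervalIntegrable (Q1 ε T R) MeasureTheory.volume R r :=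
    ((contQ1 hT hTe).mono hsub).intervalIntegrable
  have hmeas := ContinuousOn.stronglyMeasurableAtFilter
    (isOpen_Ioi (a := (0:ℝ))) (contQ1 hT hTe (R := R)) (μ := MeasureTheory.volume)
  have hcont : ContinuousAt (Q1 ε T R) r :=
    (contQ1 hT hTe).continuousAt (isOpen_Ioi.mem_nhds hr)
  exact (intervalIntegral.integral_hasDerivAt_right hint (hmeas r hr) hcont).const_add _

end Rlevel
section Lip

variable {ε T R : ℝ}

theorem lip_congr {f g : ℝ → ℝ} {L : NNReal} {s : Set ℝ}
    (h : LipschitzOnWith L f s) (hEq : Set.EqOn g f s) : LipschitzOnWith L g s := by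
  rw [lipschitzOnWith_iff_dist_le_mul] at *
  intro x hx y hy
  rw [hEq hx, hEq hy]
  exact h x hx y hy

theorem lip_glue {f : ℝ → ℝ} {L : NNReal} {a m b : ℝ} (ham : a ≤ m) (hmb : m ≤ b)
    (h₁ : LipschitzOnWith L f (Icc a m)) (h₂ : LipschitzOnWith L f (Icc m b)) :
    LipschitzOnWith L f (Icc a b) := by
  rw [lipschitzOnWith_iff_dist_le_mul] at *
  intro x hx y hy
  rcases le_total x m with hxm | hxm <;> rcases le_total y m with hym | hym
  · exact h₁ x ⟨hx.1, hxm⟩ y ⟨hy.1, hym⟩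
  · calc dist (f x) (f y) ≤ dist (f x) (f m) + dist (f m) (f y) := dist_triangle _ _ _
      _ ≤ L * dist x m + L * dist m y :=
          add_le_add (h₁ x ⟨hx.1, hxm⟩ m ⟨ham, le_refl m⟩) (h₂ m ⟨le_refl m, hmb⟩ y ⟨hym, hy.2⟩)
      _ = L * (dist x m + dist m y) := by ring
      _ = L * dist x y := by
          rw [Real.dist_eq, Real.dist_eq, Real.dist_eq,
            abs_of_nonpos (by linarith : x - m ≤ 0), abs_of_nonpos (by linarith : m - y ≤ 0),
            abs_of_nonpos (by linarith : x - y ≤ 0)]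
          ring
  · calc dist (f x) (f y) ≤ dist (f x) (f m) + dist (f m) (f y) := dist_triangle _ _ _
      _ ≤ L * dist x m + L * dist m y :=
          add_le_add (h₂ x ⟨hxm, hx.2⟩ m ⟨le_refl m, hmb⟩) (h₁ m ⟨ham, le_refl m⟩ y ⟨hy.1, hym⟩)
      _ = L * (dist x m + dist m y) := by ring
      _ = L * dist x y := by
          rw [Real.dist_eq, Real.dist_eq, Real.dist_eq,
            abs_of_nonneg (by linarith : 0 ≤ x - m), abs_of_nonneg (by linarith : 0 ≤ m - y),
            abs_of_nonneg (by linarith : 0 ≤ x - y)]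
          ring
  · exact h₂ x ⟨hxm, hx.2⟩ y ⟨hym, hy.2⟩

theorem lipPiece {u v : ℝ} (hu : 0 < u) {F F1 : ℝ → ℝ} {M : ℝ}
    (hF : ∀ t, HasDerivAt F (F1 t) t)
    (hEq : Set.EqOn (Q3 ε T R) (fun x => F (Lg R x) / x) (Icc u v))
    (hM : 0 ≤ M)
    (hbound : ∀ x ∈ Icc u v, |(F1 (Lg R x) - F (Lg R x)) / x^2| ≤ M) :
    LipschitzOnWith M.toNNReal (Q3 ε T R) (Icc u v) := by
  apply (convex_Icc u v).lipschitzOnWith_of_nnnorm_hasDerivWithin_le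
    (f' := fun x => (F1 (Lg R x) - F (Lg R x))/x^2)
  · intro x hx
    exact ((hDL (hF (Lg R x)) (lt_of_lt_of_le hu hx.1)).hasDerivWithinAt).congr hEq (hEq hx)
  · intro x hx
    rw [← NNReal.coe_le_coe, coe_nnnorm, Real.norm_eq_abs, Real.coe_toNNReal _ hM]
    exact hbound x hx

theorem lipQ3 (hε : 0 < ε) (hε1 : ε ≤ 1/9) (hT : 2 < T) (hR : 0 < R) {a b : ℝ}
    (ha : 0 < a) (haR : a ≤ R) (hbT : R * Real.exp T ≤ b) :
    LipschitzOnWith (Real.toNNReal (9/a^2)) (Q3 ε T R) (Icc a b) := by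
  have hπ := Real.pi_pos
  have hπ315 := Real.pi_lt_d2
  have hM : (0:ℝ) ≤ 9/a^2 := by positivity
  have e1 : R ≤ R * Real.exp 1 := by nlinarith [Real.one_le_exp (by norm_num : (0:ℝ) ≤ 1)]
  have e2 : R * Real.exp 1 ≤ R * Real.exp (T-1) := by
    have := Real.exp_le_exp.2 (by linarith : (1:ℝ) ≤ T - 1)
    nlinarith
  have e3 : R * Real.exp (T-1) ≤ R * Real.exp T := by
    have := Real.exp_le_exp.2 (by linarith : T - 1 ≤ T)
    nlinarith
  have hxb : ∀ x : ℝ, a ≤ x → ∀ A : ℝ, |A| ≤ 9 → |A / x^2| ≤ 9/a^2 := by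
    intro x hax A hA
    rw [abs_div, abs_of_nonneg (by positivity : (0:ℝ) ≤ x^2)]
    exact div_le_div₀ (by norm_num) hA (by positivity) (by nlinarith)
  have p1 : LipschitzOnWith (Real.toNNReal (9/a^2)) (Q3 ε T R) (Icc a R) := by
    apply lipPiece ha (F := fun _ => (0:ℝ)) (F1 := fun _ => (0:ℝ))
      (fun t => hasDerivAt_const t 0) ?_ hM ?_
    · intro x hx
      have hx0 : 0 < x := lt_of_lt_of_le ha hx.1
      have hLg := Lg_nonpos hR hx0 hx.2
      simp [Q3, Phi1_le0 hLg, Phi2_le0 hLg]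
    · intro x hx; simpa using hM
  have p2 : LipschitzOnWith (Real.toNNReal (9/a^2)) (Q3 ε T R) (Icc R (R * Real.exp 1)) := by
    apply lipPiece hR (F := fun t => bB1 ε t + bB2 ε t) (F1 := fun t => bB2 ε t + bB3 ε t)
      (fun t => (hbB1 ε t).add (hbB2 ε t)) ?_ hM ?_
    · intro x hx
      have hx0 : 0 < x := lt_of_lt_of_le hR hx.1
      have hl0 : 0 ≤ Lg R x := Lg_ge hR (by simpa using hx.1)
      have hl1 : Lg R x ≤ 1 := Lg_le hR hx0 hx.2
      simp only [Q3]
      rw [Phi1_on01 hl0 hl1, Phi2_on01 hl0 hl1]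
    · intro x hx
      apply hxb x (le_trans haR hx.1)
      unfold bB1 bB2 bB3
      rw [abs_le]
      constructor <;>
        nlinarith [Real.neg_one_le_cos (π * Lg R x), Real.cos_le_one (π * Lg R x),
          Real.neg_one_le_sin (π * Lg R x), Real.sin_le_one (π * Lg R x),
          mul_pos hε hπ, mul_pos (mul_pos hε hπ) hπ]
  have p3 : LipschitzOnWith (Real.toNNReal (9/a^2)) (Q3 ε T R)
      (Icc (R * Real.exp 1) (R * Real.exp (T-1))) := by
    apply lipPiece (lt_of_lt_of_le hR e1) (F := fun _ => -ε) (F1 := fun _ => (0:ℝ))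
      (fun t => hasDerivAt_const t (-ε)) ?_ hM ?_
    · intro x hx
      have hx0 : 0 < x := lt_of_lt_of_le (lt_of_lt_of_le hR e1) hx.1
      have hl0 : 1 ≤ Lg R x := Lg_ge hR hx.1
      have hl1 : Lg R x ≤ T - 1 := Lg_le hR hx0 hx.2
      simp only [Q3]
      rw [Phi1_onC hl0 hl1, Phi2_onC hl0 hl1]
      simp
    · intro x hx
      apply hxb x (by linarith [hx.1] : a ≤ x)
      rw [abs_le]
      constructor <;> (beta_reduce; nlinarith)
  have p4 : LipschitzOnWith (Real.toNNReal (9/a^2)) (Q3 ε T R)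
      (Icc (R * Real.exp (T-1)) (R * Real.exp T)) := by
    apply lipPiece (lt_of_lt_of_le hR (le_trans e1 e2))
      (F := fun t => bD1 ε T t + bD2 ε T t) (F1 := fun t => bD2 ε T t + bD3 ε T t)
      (fun t => (hbD1 ε T t).add (hbD2 ε T t)) ?_ hM ?_
    · intro x hx
      have hx0 : 0 < x := lt_of_lt_of_le (lt_of_lt_of_le hR (le_trans e1 e2)) hx.1
      have hl0 : T - 1 ≤ Lg R x := Lg_ge hR hx.1
      have hl1 : Lg R x ≤ T := Lg_le hR hx0 hx.2
      simp only [Q3]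
      rw [Phi1_onD hT hl0 hl1, Phi2_onD hT hl0 hl1]
    · intro x hx
      apply hxb x (by linarith [hx.1] : a ≤ x)
      unfold bD1 bD2 bD3
      rw [abs_le]
      constructor <;>
        nlinarith [Real.neg_one_le_cos (π * (Lg R x - (T-1))), Real.cos_le_one (π * (Lg R x - (T-1))),
          Real.neg_one_le_sin (π * (Lg R x - (T-1))), Real.sin_le_one (π * (Lg R x - (T-1))),
          mul_pos hε hπ, mul_pos (mul_pos hε hπ) hπ]
  have p5 : LipschitzOnWith (Real.toNNReal (9/a^2)) (Q3 ε T R) (Icc (R * Real.exp T) b) := by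
    apply lipPiece (lt_of_lt_of_le hR (le_trans e1 (le_trans e2 e3)))
      (F := fun _ => (0:ℝ)) (F1 := fun _ => (0:ℝ)) (fun t => hasDerivAt_const t 0) ?_ hM ?_
    · intro x hx
      have hLg : T ≤ Lg R x := Lg_ge hR hx.1
      simp [Q3, Phi1_geT hT hLg, Phi2_geT hT hLg]
    · intro x hx; simpa using hM
  have haT : a ≤ R * Real.exp (T-1) := le_trans haR (le_trans e1 e2)
  exact lip_glue haR (le_trans e1 (le_trans e2 (le_trans e3 hbT))) p1
    (lip_glue e1 (le_trans e2 (le_trans e3 hbT)) p2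
      (lip_glue e2 (le_trans e3 hbT) p3 (lip_glue e3 hbT p4 p5)))

end Lip
end Stmt13aux

open Stmt13aux

/-- The radial Laplacian in two dimensions: `(d²/dr² + (1/r)·d/dr) q`. -/
noncomputable def radLap (q : ℝ → ℝ) (r : ℝ) : ℝ := deriv (deriv q) r + deriv q r / r

/-- Construction of the one-dimensional virial weight used for the radial critical
Yang–Mills and equivariant wave map equations: there is a universal constant `C > 0`
such that for all `c, R > 0` there is `q : (0,∞) → ℝ` of class `C³` with locally
Lipschitz third derivative, smooth off a finite set `S`, with `q(r) = r²/2` for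
`r ≤ R`, `q` constant for `r ≥ R̃`, `|q'| ≤ Cr`, `|q''| ≤ C`, `q'' ≥ −c`, `q'/r ≥ −c`,
`(Δ_r)²q ≤ c·r⁻²` off `S`, and `|r·(q'/r)'| ≤ c`. -/
theorem stmt13 :
    ∃ C > (0 : ℝ), ∀ c > (0 : ℝ), ∀ R > (0 : ℝ),
      ∃ (q : ℝ → ℝ) (R' : ℝ) (S : Finset ℝ),
        R < R' ∧
        -- C³ regularity on (0,∞) with locally Lipschitz third derivative
        (∀ r : ℝ, 0 < r → ContDiffAt ℝ 3 q r) ∧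
        (∀ K : Set ℝ, IsCompact K → K ⊆ Set.Ioi 0 →
          ∃ L : NNReal, LipschitzOnWith L (deriv (deriv (deriv q))) K) ∧
        -- smooth off the finite set S
        (∀ r : ℝ, 0 < r → r ∉ S → ContDiffAt ℝ (⊤ : ℕ∞) q r) ∧
        -- (P1)
        (∀ r : ℝ, 0 < r → r ≤ R → q r = r ^ 2 / 2) ∧
        -- (P2)
        (∃ k₀ : ℝ, ∀ r : ℝ, R' ≤ r → q r = k₀) ∧
        -- (P3)
        (∀ r : ℝ, 0 < r → |deriv q r| ≤ C * r ∧ |deriv (deriv q) r| ≤ C) ∧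
        -- (P4)
        (∀ r : ℝ, 0 < r → -c ≤ deriv (deriv q) r ∧ -c ≤ deriv q r / r) ∧
        -- (P5)
        (∀ r : ℝ, 0 < r → r ∉ S → radLap (radLap q) r ≤ c / r ^ 2) ∧
        -- (P6)
        (∀ r : ℝ, 0 < r → |r * deriv (fun s => deriv q s / s) r| ≤ c) := by
  refine ⟨2, by norm_num, ?_⟩
  intro c hc R hR
  have hm : 0 < min c 1 := lt_min hc one_pos
  set ε : ℝ := min c 1 / 9 with hεdef
  have hε : 0 < ε := by rw [hεdef]; linarith
  have hε1 : ε ≤ 1/9 := by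
    rw [hεdef]; have := min_le_right c 1; linarith
  have hεc : 9 * ε ≤ c := by
    rw [hεdef]; have := min_le_left c 1; linarith
  set T : ℝ := 1 + 1/ε with hTdef
  have h9 : (9:ℝ) ≤ 1/ε := by
    rw [le_div_iff₀ hε]; linarith
  have hT : 2 < T := by rw [hTdef]; linarith
  have hTe : ε * (T - 1) = 1 := by rw [hTdef]; field_simp; ring
  set q : ℝ → ℝ := qf ε T R with hqdef
  set R' : ℝ := R * Real.exp T with hR'def
  set S : Finset ℝ := {R, R * Real.exp 1, R * Real.exp (T-1), R * Real.exp T} with hSdef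
  have hq : ∀ x ∈ Set.Ioi (0:ℝ), HasDerivAt q (Q1 ε T R x) x := fun x hx => hqf hT hTe hR hx
  have hd1 : ∀ x ∈ Set.Ioi (0:ℝ), deriv q x = Q1 ε T R x := fun x hx => (hq x hx).deriv
  have E1 : ∀ x ∈ Set.Ioi (0:ℝ), deriv q =ᶠ[nhds x] Q1 ε T R := fun x hx =>
    Filter.eventuallyEq_of_mem (isOpen_Ioi.mem_nhds hx) hd1
  have hd2 : ∀ x ∈ Set.Ioi (0:ℝ), deriv (deriv q) x = Q2 ε T R x := fun x hx => by
    rw [(E1 x hx).deriv_eq]; exact (hQ1 hT hTe hx).deriv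
  have E2 : ∀ x ∈ Set.Ioi (0:ℝ), deriv (deriv q) =ᶠ[nhds x] Q2 ε T R := fun x hx =>
    Filter.eventuallyEq_of_mem (isOpen_Ioi.mem_nhds hx) hd2
  have hd3 : ∀ x ∈ Set.Ioi (0:ℝ), deriv (deriv (deriv q)) x = Q3 ε T R x := fun x hx => by
    rw [(E2 x hx).deriv_eq]; exact (hQ2 hT hTe hx).deriv
  have hSne : ∀ x : ℝ, 0 < x → x ∉ S →
      Lg R x ≠ 0 ∧ Lg R x ≠ 1 ∧ Lg R x ≠ T - 1 ∧ Lg R x ≠ T := by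
    intro x hx hxS
    rw [hSdef] at hxS
    simp only [Finset.mem_insert, Finset.mem_singleton, not_or] at hxS
    obtain ⟨n1, n2, n3, n4⟩ := hxS
    exact ⟨Lg_ne hR hx (by simpa using n1), Lg_ne hR hx n2, Lg_ne hR hx n3, Lg_ne hR hx n4⟩
  have hInt : ∀ u v : ℝ, 0 < u → 0 < v →
      IntervalIntegrable (Q1 ε T R) MeasureTheory.volume u v := fun u v hu hv =>
    ((contQ1 hT hTe).mono (fun x hx => lt_of_lt_of_le (lt_min hu hv) hx.1)).intervalIntegrable
  refine ⟨q, R', S, ?_, ?_, ?_, ?_, ?_, ?_, ?_, ?_, ?_, ?_⟩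
  · -- R < R'
    rw [hR'def]
    nlinarith [Real.add_one_le_exp T]
  · -- C³
    have c3 : ContDiffOn ℝ 3 q (Set.Ioi 0) := by
      rw [show (3 : WithTop ℕ∞) = 2 + 1 by norm_num,
        contDiffOn_succ_iff_deriv_of_isOpen isOpen_Ioi]
      refine ⟨fun x hx => ((hq x hx).differentiableAt).differentiableWithinAt, by simp, ?_⟩
      have cQ1 : ContDiffOn ℝ 2 (Q1 ε T R) (Set.Ioi 0) := by
        rw [show (2 : WithTop ℕ∞) = 1 + 1 by norm_num,
          contDiffOn_succ_iff_deriv_of_isOpen isOpen_Ioi]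
        refine ⟨fun x hx => (hQ1 hT hTe hx).differentiableAt.differentiableWithinAt,
          by simp, ?_⟩
        have cQ2 : ContDiffOn ℝ 1 (Q2 ε T R) (Set.Ioi 0) := by
          rw [show (1 : WithTop ℕ∞) = 0 + 1 by norm_num,
            contDiffOn_succ_iff_deriv_of_isOpen isOpen_Ioi]
          refine ⟨fun x hx => (hQ2 hT hTe hx).differentiableAt.differentiableWithinAt,
            by simp, ?_⟩
          rw [contDiffOn_zero]
          exact (contQ3 hT).congr (fun x hx => (hQ2 hT hTe hx).deriv)
        exact cQ2.congr (fun x hx => (hQ1 hT hTe hx).deriv)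
      exact cQ1.congr hd1
    exact fun r hr => c3.contDiffAt (isOpen_Ioi.mem_nhds hr)
  · -- Lipschitz
    intro K hK hKsub
    rcases K.eq_empty_or_nonempty with hKe | hKne
    · exact ⟨1, hKe ▸ lipschitzOnWith_empty _ _⟩
    · have hInfK : sInf K ∈ K := hK.sInf_mem hKne
      set a : ℝ := min (sInf K) R with hadef
      have ha : 0 < a := lt_min (hKsub hInfK) hR
      set b : ℝ := max (sSup K) (R * Real.exp T) with hbdef
      have hKab : K ⊆ Set.Icc a b := fun x hx =>
        ⟨le_trans (min_le_left _ _) (csInf_le hK.bddBelow hx),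
         le_trans (le_csSup hK.bddAbove hx) (le_max_left _ _)⟩
      have hlip := (lipQ3 hε hε1 hT hR ha (min_le_right _ _) (le_max_right _ _)).mono hKab
      exact ⟨Real.toNNReal (9/a^2), lip_congr hlip (fun x hx => hd3 x (hKsub hx))⟩
  · -- smooth off S
    intro r hr hrS
    set U : Set ℝ := Set.Ioi 0 \ ↑S with hUdef
    have hUopen : IsOpen U := isOpen_Ioi.sdiff (S.finite_toSet.isClosed)
    have hrU : r ∈ U := ⟨hr, by simpa using hrS⟩
    have smoothQ1 : ContDiffOn ℝ ((⊤:ℕ∞) : WithTop ℕ∞) (Q1 ε T R) U := by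
      intro x hx
      obtain ⟨n0, n1, n2, n3⟩ := hSne x hx.1 (by simpa using hx.2)
      have hLgsm : ContDiffAt ℝ ((⊤:ℕ∞) : WithTop ℕ∞) (Lg R) x :=
        (Real.contDiffAt_log.2 (ne_of_gt hx.1)).sub contDiffAt_const
      exact ((contDiffAt_id.mul ((hPhiSm hT n0 n1 n2 n3).comp x hLgsm)).contDiffWithinAt)
    have hqsm : ContDiffOn ℝ ((⊤:ℕ∞) : WithTop ℕ∞) q U := by
      rw [contDiffOn_infty_iff_deriv_of_isOpen hUopen]
      exact ⟨fun x hx => (hq x hx.1).differentiableAt.differentiableWithinAt,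
        smoothQ1.congr (fun x hx => hd1 x hx.1)⟩
    exact hqsm.contDiffAt (hUopen.mem_nhds hrU)
  · -- P1
    intro r hr hrR
    show R^2/2 + ∫ x in R..r, Q1 ε T R x = r^2/2
    have heq : ∫ x in R..r, Q1 ε T R x = ∫ x in R..r, x := by
      apply intervalIntegral.integral_congr
      intro x hx
      have hx0 : 0 < x := lt_of_lt_of_le (lt_min hR hr) hx.1
      have hxR : x ≤ R := le_trans hx.2 (sup_le (le_refl R) hrR)
      simp [Q1, Phi_le0 (Lg_nonpos hR hx0 hxR)]
    rw [heq, integral_id]; ring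
  · -- P2
    refine ⟨q R', ?_⟩
    intro r hrR'
    have hR'0 : 0 < R' := by rw [hR'def]; positivity
    have hr0 : 0 < r := lt_of_lt_of_le hR'0 hrR'
    have hadd := intervalIntegral.integral_add_adjacent_intervals
      (hInt R R' hR hR'0) (hInt R' r hR'0 hr0)
    have hz : ∫ x in R'..r, Q1 ε T R x = 0 := by
      rw [intervalIntegral.integral_congr (g := fun _ => (0:ℝ)) ?_]
      · exact intervalIntegral.integral_zero
      · intro x hx
        have hinf : R' ⊓ r = R' := inf_eq_left.2 hrR'
        have hxR' : R * Real.exp T ≤ x := by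
          rw [← hR'def, ← hinf]; exact hx.1
        simp [Q1, Phi_geT hT (Lg_ge hR hxR')]
    show R^2/2 + ∫ x in R..r, Q1 ε T R x = q R'
    rw [← hadd, hz]
    show R^2/2 + ((∫ x in R..R', Q1 ε T R x) + 0) = R^2/2 + ∫ x in R..R', Q1 ε T R x
    ring
  · -- P3
    intro r hr
    have i1 := I1 hε hε1 hT hTe (Lg R r)
    have i2 := I2 (T := T) hε (Lg R r)
    constructor
    · rw [hd1 r hr]
      show |r * Phi ε T (Lg R r)| ≤ 2 * r
      rw [abs_mul, abs_of_pos hr]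
      have hab : |Phi ε T (Lg R r)| ≤ 1 := abs_le.2 ⟨by linarith [i1.1], i1.2⟩
      nlinarith [abs_nonneg (Phi ε T (Lg R r))]
    · rw [hd2 r hr]
      show |Phi ε T (Lg R r) + Phi1 ε T (Lg R r)| ≤ 2
      rw [abs_le]
      constructor <;> nlinarith [i1.1, i1.2, i2.1, i2.2]
  · -- P4
    intro r hr
    have i1 := I1 hε hε1 hT hTe (Lg R r)
    have i2 := I2 (T := T) hε (Lg R r)
    constructor
    · rw [hd2 r hr]
      show -c ≤ Phi ε T (Lg R r) + Phi1 ε T (Lg R r)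
      nlinarith [i1.1, i2.1]
    · rw [hd1 r hr]
      show -c ≤ r * Phi ε T (Lg R r) / r
      rw [mul_div_cancel_left₀ _ hr.ne']
      nlinarith [i1.1]
  · -- P5
    intro r hr hrS
    obtain ⟨n0, n1, n2, n3⟩ := hSne r hr hrS
    have hGx : ∀ x ∈ Set.Ioi (0:ℝ),
        radLap q x = 2 * Phi ε T (Lg R x) + Phi1 ε T (Lg R x) := by
      intro x hx
      show deriv (deriv q) x + deriv q x / x = _
      rw [hd2 x hx, hd1 x hx]
      show Phi ε T (Lg R x) + Phi1 ε T (Lg R x) + x * Phi ε T (Lg R x) / x = _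
      rw [mul_div_cancel_left₀ _ (ne_of_gt hx)]
      ring
    have EG : radLap q =ᶠ[nhds r] (fun x => 2 * Phi ε T (Lg R x) + Phi1 ε T (Lg R x)) :=
      Filter.eventuallyEq_of_mem (isOpen_Ioi.mem_nhds hr) hGx
    have hGd : ∀ x ∈ Set.Ioi (0:ℝ),
        HasDerivAt (fun x => 2 * Phi ε T (Lg R x) + Phi1 ε T (Lg R x))
          ((2 * Phi1 ε T (Lg R x) + Phi2 ε T (Lg R x)) / x) x := by
      intro x hx
      have h1 := ((hPhi hT hTe (Lg R x)).comp x (hLg (ne_of_gt hx))).const_mul 2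
      have h2 : HasDerivAt (fun y => Phi1 ε T (Lg R y)) (Phi2 ε T (Lg R x) * x⁻¹) x :=
        (hPhi1 hT (Lg R x)).comp x (hLg (ne_of_gt hx))
      refine (h1.add h2).congr_deriv ?_
      field_simp
    have ED : deriv (radLap q) =ᶠ[nhds r]
        (fun x => (2 * Phi1 ε T (Lg R x) + Phi2 ε T (Lg R x)) / x) :=
      EG.deriv.trans (Filter.eventuallyEq_of_mem (isOpen_Ioi.mem_nhds hr)
        (fun x hx => (hGd x hx).deriv))
    have hF : HasDerivAt (fun t => 2 * Phi1 ε T t + Phi2 ε T t)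
        (2 * Phi2 ε T (Lg R r) + Phi3 ε T (Lg R r)) (Lg R r) :=
      ((hPhi1 hT (Lg R r)).const_mul 2).add (hPhi2 hT n0 n1 n2 n3)
    have hD1d := hDL hF hr
    have key : radLap (radLap q) r = (2 * Phi2 ε T (Lg R r) + Phi3 ε T (Lg R r)) / r^2 := by
      show deriv (deriv (radLap q)) r + deriv (radLap q) r / r = _
      rw [ED.deriv_eq, hD1d.deriv, ED.eq_of_nhds]
      field_simp; ring
    rw [key]
    have i3 := I3 (T := T) hε (Lg R r)
    gcongr
    linarith
  · -- P6
    intro r hr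
    have Ephi : (fun s => deriv q s / s) =ᶠ[nhds r] (fun s => Phi ε T (Lg R s)) := by
      apply Filter.eventuallyEq_of_mem (isOpen_Ioi.mem_nhds hr)
      intro x hx
      show deriv q x / x = Phi ε T (Lg R x)
      rw [hd1 x hx]
      show x * Phi ε T (Lg R x) / x = _
      rw [mul_div_cancel_left₀ _ (ne_of_gt hx)]
    have hc2 : HasDerivAt (fun s => Phi ε T (Lg R s)) (Phi1 ε T (Lg R r) * r⁻¹) r :=
      (hPhi hT hTe (Lg R r)).comp r (hLg hr.ne')
    rw [Ephi.deriv_eq, hc2.deriv]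
    have i2 := I2 (T := T) hε (Lg R r)
    rw [show r * (Phi1 ε T (Lg R r) * r⁻¹) = Phi1 ε T (Lg R r) by field_simp]
    rw [abs_le]
    constructor <;> nlinarith [i2.1, i2.2]
end

section
/- For every integer k ≥ 3: ∫₀^∞ (2k/(r^k + r^{−k})) · (16k²·r^{k−2}/(r^k + r^{−k})²) · r dr = (4k²/π)·sin(π/k) · ∫₀^∞ (2k/(r^k + r^{−k}))² · r dr. (Both sides are equal to 8k²; in particular both integrals converge.) -/
open MeasureTheory Set Filter Topology


lemma int_exp {s b : ℝ} (hs : -1 < s) (hb : 0 < b) :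
    IntegrableOn (fun x : ℝ => x ^ s * Real.exp (-(b * x))) (Ioi 0) := by
  have h := integrableOn_rpow_mul_exp_neg_mul_rpow hs one_pos hb
  simpa [Real.rpow_one, neg_mul] using h

lemma beta_int {a : ℝ} (ha : 0 < a) (ha1 : a < 1) :
    IntegrableOn (fun x : ℝ => x ^ a / (1 + x) ^ 2) (Ioi 0) ∧
      ∫ x in Ioi 0, x ^ a / (1 + x) ^ 2 = Real.Gamma (1 + a) * Real.Gamma (1 - a) := by
  set μ := volume.restrict (Ioi (0:ℝ)) with hμ
  set F : ℝ → ℝ → ℝ := fun t x => (t * Real.exp (-t)) * (x ^ a * Real.exp (-(t * x))) with hF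
  have hmeas : AEStronglyMeasurable (fun p : ℝ × ℝ => F p.1 p.2) (μ.prod μ) := by
    apply Measurable.aestronglyMeasurable; fun_prop
  have hslice : ∀ t : ℝ, t ∈ Ioi (0:ℝ) → Integrable (F t) μ := by
    intro t ht
    exact ((int_exp (by linarith) ht).const_mul _)
  have hval : ∀ t : ℝ, t ∈ Ioi (0:ℝ) →
      ∫ x, F t x ∂μ = Real.Gamma (1 + a) * (t ^ (-a) * Real.exp (-(1 * t))) := by
    intro t ht
    have ht' : (0:ℝ) < t := ht
    simp only [hμ, hF]
    rw [MeasureTheory.integral_const_mul]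
    have h0 : ∫ x in Ioi (0:ℝ), x ^ a * Real.exp (-(t * x))
        = (1 / t) ^ (1 + a) * Real.Gamma (1 + a) := by
      rw [← Real.integral_rpow_mul_exp_neg_mul_Ioi (by linarith : (0:ℝ) < 1 + a) ht']
      congr 1; ext x; norm_num
    have h2 : t ^ (-a) = t * t ^ (-(1+a)) := by
      rw [show -a = 1 + -(1+a) by ring, Real.rpow_add ht', Real.rpow_one]
    rw [h0, one_div, Real.inv_rpow ht'.le, ← Real.rpow_neg ht'.le, h2, one_mul]
    ring
  -- nonnegativity of F on the relevant region
  have hnonneg : ∀ t ∈ Ioi (0:ℝ), ∀ x ∈ Ioi (0:ℝ), 0 ≤ F t x := by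
    intro t ht x hx
    have : (0:ℝ) ≤ x ^ a := Real.rpow_nonneg (le_of_lt hx) a
    have h1 : (0:ℝ) < t := ht
    positivity
  -- ∫ x, ‖F t x‖ = ∫ x, F t x for t > 0
  have hnormval : ∀ t : ℝ, t ∈ Ioi (0:ℝ) →
      ∫ x, ‖F t x‖ ∂μ = Real.Gamma (1 + a) * (t ^ (-a) * Real.exp (-(1 * t))) := by
    intro t ht
    rw [← hval t ht, hμ]
    refine setIntegral_congr_fun measurableSet_Ioi (fun x hx => ?_)
    exact Real.norm_of_nonneg (hnonneg t ht x hx)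
  -- integrability on the product
  have key : Integrable (fun p : ℝ × ℝ => F p.1 p.2) (μ.prod μ) := by
    rw [MeasureTheory.integrable_prod_iff hmeas]
    constructor
    · filter_upwards [ae_restrict_mem measurableSet_Ioi] with t ht using hslice t ht
    · have hg : Integrable (fun t : ℝ => Real.Gamma (1 + a) *
          (t ^ (-a) * Real.exp (-(1 * t)))) μ :=
        (int_exp (by linarith : (-1:ℝ) < -a) one_pos).const_mul _
      refine hg.congr ?_
      filter_upwards [ae_restrict_mem measurableSet_Ioi] with t ht
      exact (hnormval t ht).symm
  -- value of inner integral in t, for x > 0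
  have hinner : ∀ x : ℝ, x ∈ Ioi (0:ℝ) →
      ∫ t, F t x ∂μ = x ^ a / (1 + x) ^ 2 := by
    intro x hx
    have hx' : (0:ℝ) < x := hx
    have h1x : (0:ℝ) < 1 + x := by linarith
    simp only [hμ, hF]
    have h0 : ∀ t : ℝ, t ∈ Ioi (0:ℝ) →
        (t * Real.exp (-t)) * (x ^ a * Real.exp (-(t * x)))
          = x ^ a * (t ^ ((2:ℝ) - 1) * Real.exp (-((1 + x) * t))) := by
      intro t ht
      have h2 : t ^ ((2:ℝ) - 1) = t := by norm_num
      rw [h2, show -((1 + x) * t) = -t + -(t * x) by ring, Real.exp_add]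
      ring
    rw [setIntegral_congr_fun measurableSet_Ioi h0, MeasureTheory.integral_const_mul,
      Real.integral_rpow_mul_exp_neg_mul_Ioi (by norm_num : (0:ℝ) < 2) h1x,
      Real.Gamma_two]
    rw [one_div, Real.inv_rpow h1x.le, show ((2:ℝ)) = ((2:ℕ):ℝ) by norm_num,
      Real.rpow_natCast]
    field_simp
  -- assemble
  have key' : Integrable (Function.uncurry F) (μ.prod μ) := key
  have swap := MeasureTheory.integral_integral_swap key'
  have eqL : ∫ t, ∫ x, F t x ∂μ ∂μ = Real.Gamma (1 + a) * Real.Gamma (1 - a) := by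
    rw [hμ]
    rw [setIntegral_congr_fun measurableSet_Ioi (fun t ht => hval t ht)]
    rw [MeasureTheory.integral_const_mul]
    congr 1
    rw [Real.Gamma_eq_integral (by linarith : (0:ℝ) < 1 - a)]
    refine setIntegral_congr_fun measurableSet_Ioi (fun t ht => ?_)
    rw [show (1:ℝ) - a - 1 = -a by ring, one_mul]
    ring
  have eqR : ∫ x, ∫ t, F t x ∂μ ∂μ = ∫ x in Ioi (0:ℝ), x ^ a / (1 + x) ^ 2 := by
    rw [hμ]
    exact setIntegral_congr_fun measurableSet_Ioi (fun x hx => hinner x hx)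
  constructor
  · have hi := key'.integral_prod_right
    refine (hi.congr ?_ : Integrable _ μ)
    filter_upwards [ae_restrict_mem measurableSet_Ioi] with x hx
    exact hinner x hx
  · rw [← eqR, ← swap, eqL]


lemma stmt17_partA (m : ℕ) :
    IntegrableOn
      (fun r : ℝ => (2 * ((m+3 : ℕ) : ℝ) / (r ^ (m+3) + (r ^ (m+3))⁻¹)) *
        (16 * ((m+3 : ℕ) : ℝ) ^ 2 * r ^ (m+3 - 2) / (r ^ (m+3) + (r ^ (m+3))⁻¹) ^ 2) * r)
      (Ioi 0) ∧
    (∫ r in Ioi (0 : ℝ), (2 * ((m+3 : ℕ) : ℝ) / (r ^ (m+3) + (r ^ (m+3))⁻¹)) *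
        (16 * ((m+3 : ℕ) : ℝ) ^ 2 * r ^ (m+3 - 2) / (r ^ (m+3) + (r ^ (m+3))⁻¹) ^ 2) * r)
      = 8 * ((m+3 : ℕ) : ℝ) ^ 2 := by
  set K : ℝ := ((m+3 : ℕ) : ℝ) with hK
  set k : ℕ := m + 3 with hkk
  set f : ℝ → ℝ := fun r : ℝ => (2 * K / (r ^ k + (r ^ k)⁻¹)) *
        (16 * K ^ 2 * r ^ (k - 2) / (r ^ k + (r ^ k)⁻¹) ^ 2) * r with hf
  set G : ℝ → ℝ := fun r => 16 * K^2 * ((1/2) * ((1 + r^(2*k))^2)⁻¹ - (1 + r^(2*k))⁻¹)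
    with hG
  have hpos : ∀ r : ℝ, (0:ℝ) < 1 + r ^ (2*k) := by
    intro r
    have : (0:ℝ) ≤ r ^ (2*k) := by
      rw [show 2*k = k*2 by ring, pow_mul]; positivity
    linarith
  have hderiv : ∀ x ∈ Ioi (0:ℝ), HasDerivAt G (f x) x := by
    intro x hx
    have hx' : (0:ℝ) < x := hx
    have hu : HasDerivAt (fun r : ℝ => 1 + r ^ (2*k)) ((2*k : ℝ) * x ^ (2*k-1)) x := by
      simpa using (hasDerivAt_pow (2*k) x).const_add 1
    have h1 := ((hu.pow 2).inv (ne_of_gt (pow_pos (hpos x) 2))).const_mul (1/2 : ℝ)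
    have h2 := hu.inv (ne_of_gt (hpos x))
    have h := (h1.sub h2).const_mul (16 * K^2)
    convert h using 1
    · rfl
    · rfl
    · rfl
    have hA : (0:ℝ) < x ^ k := pow_pos hx' k
    have hAne : x ^ k + (x ^ k)⁻¹ ≠ 0 := by positivity
    have h1x := (hpos x).ne'
    rw [hf, hK]
    simp only [hkk]
    push_cast
    simp only [show 2*(m+3) = 2*m+6 from by omega, show 2*(m+3)-1 = 2*m+5 from by omega,
      show 2*m+6-1 = 2*m+5 from by omega, Pi.pow_apply]
    field_simp
    ring
  have hnonneg : ∀ x ∈ Ioi (0:ℝ), 0 ≤ f x := by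
    intro x hx
    have hx' : (0:ℝ) < x := hx
    have hA : (0:ℝ) < x ^ k := pow_pos hx' k
    have hxk : (0:ℝ) ≤ x ^ (k-2) := by positivity
    have hD : (0:ℝ) < x ^ k + (x ^ k)⁻¹ := by positivity
    apply mul_nonneg (mul_nonneg (div_nonneg (by positivity) hD.le)
      (div_nonneg (by positivity) (by positivity))) hx'.le
  have htop : Tendsto G atTop (𝓝 0) := by
    have h0 : Tendsto (fun r : ℝ => 1 + r ^ (2*k)) atTop atTop :=
      tendsto_atTop_add_const_left _ 1 (tendsto_pow_atTop (by omega : 2*k ≠ 0))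
    have h1 : Tendsto (fun r : ℝ => (1 + r ^ (2*k))⁻¹) atTop (𝓝 0) :=
      h0.inv_tendsto_atTop
    have h2 : Tendsto (fun r : ℝ => ((1 + r ^ (2*k))^2)⁻¹) atTop (𝓝 0) :=
      (((tendsto_pow_atTop (two_ne_zero)).comp h0)).inv_tendsto_atTop
    have := (((h2.const_mul (1/2 : ℝ)).sub h1).const_mul (16 * K^2))
    rw [hG]
    simpa using this
  have hcont : ContinuousWithinAt G (Ici 0) 0 := by
    apply Continuous.continuousWithinAt
    rw [hG]
    fun_prop (disch := intro x; first
      | exact ne_of_gt (pow_pos (hpos x) 2)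
      | exact (hpos x).ne')
  have hG0 : G 0 = -(8 * K ^ 2) := by
    have : (0:ℝ) ^ (2*k) = 0 := zero_pow (by omega)
    rw [hG]
    norm_num [this]
    ring
  constructor
  · exact integrableOn_Ioi_deriv_of_nonneg hcont hderiv hnonneg htop
  · rw [MeasureTheory.integral_Ioi_of_hasDerivAt_of_nonneg hcont hderiv hnonneg htop, hG0]
    ring

lemma stmt17_partB (m : ℕ) :
    IntegrableOn (fun r : ℝ =>
        (2 * ((m+3:ℕ):ℝ) / (r ^ (m+3) + (r ^ (m+3))⁻¹)) ^ 2 * r) (Ioi 0) ∧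
    (∫ r in Ioi (0:ℝ), (2 * ((m+3:ℕ):ℝ) / (r ^ (m+3) + (r ^ (m+3))⁻¹)) ^ 2 * r)
      = 2 * Real.pi / Real.sin (Real.pi / ((m+3:ℕ):ℝ)) := by
  set k : ℕ := m + 3 with hkk
  set K : ℝ := ((m+3 : ℕ) : ℝ) with hK
  have hK3 : (3:ℝ) ≤ K := by rw [hK]; exact_mod_cast by omega
  have hKpos : (0:ℝ) < K := by linarith
  set a : ℝ := 1 / K with haK
  have ha : 0 < a := by positivity
  have ha1 : a < 1 := by
    rw [haK, div_lt_one hKpos]; linarith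
  set g : ℝ → ℝ := fun u => 2 * K * (u ^ a / (1 + u) ^ 2) with hg
  have hp : (2 * K : ℝ) ≠ 0 := by positivity
  have h_eq : ∀ r ∈ Ioi (0:ℝ),
      (2 * K / (r ^ k + (r ^ k)⁻¹)) ^ 2 * r
        = (|2 * K| * r ^ ((2 * K : ℝ) - 1)) • g (r ^ (2 * K : ℝ)) := by
    intro r hr
    have hr' : (0:ℝ) < r := hr
    have habs : |2 * K| = 2 * K := abs_of_pos (by positivity)
    have hc1 : (2 * K : ℝ) = ((2 * k : ℕ) : ℝ) := by rw [hK, hkk]; push_cast; ring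
    have hp1 : r ^ (2 * K : ℝ) = r ^ (2 * k : ℕ) := by
      rw [hc1, Real.rpow_natCast]
    have hp2 : r ^ ((2 * K : ℝ) - 1) = r ^ (2 * k - 1 : ℕ) := by
      rw [show (2 * K : ℝ) - 1 = ((2 * k - 1 : ℕ) : ℝ) by
        rw [Nat.cast_sub (by omega)]; rw [hc1]; push_cast; ring, Real.rpow_natCast]
    have hp3 : (r ^ (2 * k : ℕ)) ^ (a : ℝ) = r ^ 2 := by
      rw [← Real.rpow_natCast r (2 * k), ← Real.rpow_mul hr'.le]
      rw [show ((2 * k : ℕ) : ℝ) * a = 2 by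
        rw [haK, ← hc1]; field_simp]
      rw [show (2:ℝ) = ((2:ℕ):ℝ) by norm_num, Real.rpow_natCast]
    rw [smul_eq_mul, habs, hp2, hp1, hg]
    simp only
    rw [hp3]
    have hA : (0:ℝ) < r ^ k := pow_pos hr' k
    have hAne : r ^ k + (r ^ k)⁻¹ ≠ 0 := by positivity
    have h1x : (1:ℝ) + r ^ (2 * k) ≠ 0 := by positivity
    simp only [hkk, show 2*(m+3) = 2*m+6 from by omega, show 2*(m+3)-1 = 2*m+5 from by omega,
      show 2*m+6-1 = 2*m+5 from by omega]
    field_simp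
    ring
  have hgint : IntegrableOn g (Ioi 0) := by
    rw [hg]
    exact ((beta_int ha ha1).1.const_mul (2 * K))
  have hsub := MeasureTheory.integrableOn_Ioi_comp_rpow_iff g hp
  constructor
  · exact (hsub.mpr hgint).congr_fun (fun x hx => (h_eq x hx).symm) measurableSet_Ioi
  · rw [setIntegral_congr_fun measurableSet_Ioi h_eq]
    have := MeasureTheory.integral_comp_rpow_Ioi g hp
    rw [this, hg]
    rw [MeasureTheory.integral_const_mul, (beta_int ha ha1).2]
    rw [show (1:ℝ) + a = a + 1 by ring, Real.Gamma_add_one (ne_of_gt ha),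
      show a * Real.Gamma a * Real.Gamma (1 - a)
          = a * (Real.Gamma a * Real.Gamma (1 - a)) by ring,
      Real.Gamma_mul_Gamma_one_sub]
    rw [haK]
    have hsin : Real.sin (Real.pi * (1 / K)) = Real.sin (Real.pi / K) := by
      rw [mul_one_div]
    rw [hsin]
    have : Real.sin (Real.pi / K) ≠ 0 := by
      apply ne_of_gt
      apply Real.sin_pos_of_pos_of_lt_pi
      · positivity
      · rw [div_lt_iff₀ hKpos]
        nlinarith [Real.pi_pos]
    field_simp


/-- The interaction integral identity determining the concentration rate of the
two-bubble for `k`-equivariant wave maps (`k ≥ 3`):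
`∫₀^∞ ΛW(r)·(16k²r^{k−2}/(r^k+r^{−k})²) r dr = (4k²/π)·sin(π/k)·∫₀^∞ ΛW(r)² r dr`,
where `ΛW(r) = 2k/(r^k + r^{−k})`; both integrals converge and both sides equal `8k²`. -/
theorem stmt17 (k : ℕ) (hk : 3 ≤ k) :
    IntegrableOn
      (fun r : ℝ => (2 * (k : ℝ) / (r ^ k + (r ^ k)⁻¹)) *
        (16 * (k : ℝ) ^ 2 * r ^ (k - 2) / (r ^ k + (r ^ k)⁻¹) ^ 2) * r)
      (Ioi 0) ∧
    IntegrableOn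
      (fun r : ℝ => (2 * (k : ℝ) / (r ^ k + (r ^ k)⁻¹)) ^ 2 * r) (Ioi 0) ∧
    (∫ r in Ioi (0 : ℝ), (2 * (k : ℝ) / (r ^ k + (r ^ k)⁻¹)) *
        (16 * (k : ℝ) ^ 2 * r ^ (k - 2) / (r ^ k + (r ^ k)⁻¹) ^ 2) * r)
      = (4 * (k : ℝ) ^ 2 / Real.pi) * Real.sin (Real.pi / k) *
          ∫ r in Ioi (0 : ℝ), (2 * (k : ℝ) / (r ^ k + (r ^ k)⁻¹)) ^ 2 * r ∧
    (∫ r in Ioi (0 : ℝ), (2 * (k : ℝ) / (r ^ k + (r ^ k)⁻¹)) *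
        (16 * (k : ℝ) ^ 2 * r ^ (k - 2) / (r ^ k + (r ^ k)⁻¹) ^ 2) * r)
      = 8 * (k : ℝ) ^ 2 := by
  obtain ⟨m, rfl⟩ : ∃ m, k = m + 3 := ⟨k - 3, by omega⟩
  obtain ⟨hA1, hA2⟩ := stmt17_partA m
  obtain ⟨hB1, hB2⟩ := stmt17_partB m
  refine ⟨hA1, hB1, ?_, hA2⟩
  rw [hA2, hB2]
  have hKpos : (0:ℝ) < ((m+3:ℕ):ℝ) := by positivity
  have hsin : Real.sin (Real.pi / ((m+3:ℕ):ℝ)) ≠ 0 := by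
    apply ne_of_gt
    apply Real.sin_pos_of_pos_of_lt_pi
    · positivity
    · rw [div_lt_iff₀ hKpos]
      nlinarith [Real.pi_pos, hKpos, show (3:ℝ) ≤ ((m+3:ℕ):ℝ) from by exact_mod_cast by omega]
  set K : ℝ := ((m+3:ℕ):ℝ)
  set s : ℝ := Real.sin (Real.pi / K)
  calc (8:ℝ) * K^2 = 8*K^2 * (Real.pi/Real.pi) * (s/s) := by
        rw [div_self Real.pi_ne_zero, div_self hsin]; ring
    _ = 4 * K^2 / Real.pi * s * (2 * Real.pi / s) := by ring
end
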